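/- arXiv:1012.0014 — 4 statements merged into one kernel-verified Lean document; each statement's English description precedes it below -/
import Mathlib

section
/- For a partition ν contained in the e×f rectangle (i.e. ν₁ ≤ f and ν*₁ ≤ e), the product of (f + c(α)) over all boxes α of the rectangle e×f equals the product of (f + c(α)) over all boxes of the complement partition (e−ν*_f, …, e−ν*_1) times the product of (e + c(β)) over all boxes β of ν, where c((i,j)) = j − i is the content of a box. That is, (f | e×f − ν̃)·(e | ν) = (f | e×f). -/
open scoped Classical BigOperators
noncomputable section

namespace ChernTensor

/-- The rectangular Young diagram with `r` rows each of length `c`. -/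
def rect (r c : ℕ) : YoungDiagram :=
  ⟨Finset.range r ×ˢ Finset.range c, by
    intro p q hle hp
    simp only [Finset.coe_product, Set.mem_prod, Finset.mem_coe, Finset.mem_range] at hp ⊢
    exact ⟨lt_of_le_of_lt hle.1 hp.1, lt_of_le_of_lt hle.2 hp.2⟩⟩

/-- The complement of a diagram `d` (rotated by 180°) inside the rectangle
with `r` rows and `c` columns. -/
def complIn (r c : ℕ) (d : YoungDiagram) : YoungDiagram :=
  ⟨(Finset.range r ×ˢ Finset.range c).filter
      (fun p => (r - 1 - p.1, c - 1 - p.2) ∉ d), by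
    intro p q hle hp
    simp only [Finset.coe_filter, Set.mem_setOf_eq, Finset.mem_product,
      Finset.mem_range] at hp ⊢
    refine ⟨⟨lt_of_le_of_lt hle.1 hp.1.1, lt_of_le_of_lt hle.2 hp.1.2⟩, fun hq => hp.2 ?_⟩
    exact d.isLowerSet (Prod.mk_le_mk.mpr ⟨Nat.sub_le_sub_left hle.1 _,
      Nat.sub_le_sub_left hle.2 _⟩) hq⟩

/-- The complement `e×f − ν̃ = (e − ν*_f, …, e − ν*_1)` of `ν` in the rectangle
with `f` rows each of length `e` (the paper's `e×f`). -/
def rectCompl (e f : ℕ) (ν : YoungDiagram) : YoungDiagram :=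
  complIn f e ν.transpose

/-- The product of the hook lengths of all boxes of a Young diagram, as a rational. -/
def hookProd (ν : YoungDiagram) : ℚ :=
  ∏ c ∈ ν.cells, ((ν.rowLen c.1 + ν.colLen c.2 - c.1 - c.2 - 1 : ℕ) : ℚ)

/-- The content polynomial `(n | ρ) = ∏_{(i,j) ∈ ρ} (n + j − i)` evaluated at `n`. -/
def contPoly (n : ℚ) (ρ : YoungDiagram) : ℚ :=
  ∏ c ∈ ρ.cells, (n + (c.2 : ℚ) - (c.1 : ℚ))

/-- The skew content polynomial `(n | ρ − σ) = ∏_{(i,j) ∈ ρ/σ} (n + j − i)`. -/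
def skewContPoly (n : ℚ) (ρ σ : YoungDiagram) : ℚ :=
  ∏ c ∈ ρ.cells \ σ.cells, (n + (c.2 : ℚ) - (c.1 : ℚ))

/-- `T : ℕ×ℕ → ℕ` is a Littlewood–Richardson skew tableau of shape `ν/λ` and
content `μ`: entries (≥ 1) exactly on the skew cells, rows weakly increasing,
columns strictly increasing, exactly `μ_k` entries equal to `k` (1-indexed),
and the reverse reading word is a lattice word. -/
def IsLRTableau (lam mu nu : YoungDiagram) (T : ℕ × ℕ → ℕ) : Prop :=
  (∀ c : ℕ × ℕ, c ∈ nu.cells \ lam.cells ↔ T c ≠ 0) ∧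
  (∀ i j j', j ≤ j' → (i, j) ∈ nu.cells \ lam.cells → (i, j') ∈ nu.cells \ lam.cells →
    T (i, j) ≤ T (i, j')) ∧
  (∀ i i' j, i < i' → (i, j) ∈ nu.cells \ lam.cells → (i', j) ∈ nu.cells \ lam.cells →
    T (i, j) < T (i', j)) ∧
  (∀ k : ℕ, ((nu.cells \ lam.cells).filter (fun c => T c = k + 1)).card = mu.rowLen k) ∧
  (∀ c ∈ nu.cells \ lam.cells, ∀ k : ℕ,
    (((nu.cells \ lam.cells).filter
        (fun d => (d.1 < c.1 ∨ (d.1 = c.1 ∧ c.2 ≤ d.2)) ∧ T d = k + 2)).card ≤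
     ((nu.cells \ lam.cells).filter
        (fun d => (d.1 < c.1 ∨ (d.1 = c.1 ∧ c.2 ≤ d.2)) ∧ T d = k + 1)).card))

/-- The Littlewood–Richardson coefficient `c^ν_{λμ}`, defined as the number of
Littlewood–Richardson skew tableaux of shape `ν/λ` and content `μ`. -/
def lrCoeff (lam mu nu : YoungDiagram) : ℕ :=
  if lam ≤ nu then Nat.card {T : ℕ × ℕ → ℕ // IsLRTableau lam mu nu T} else 0

/-- The universal coefficient `P_{λ,μ}(e,f) = ∑_ν c^{ν*}_{λ*,μ} (e|ν−λ)(f|ν*−μ)/h(ν)`. -/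
def P (lam mu : YoungDiagram) (e f : ℚ) : ℚ :=
  ∑ᶠ nu : YoungDiagram, (lrCoeff lam.transpose mu nu.transpose : ℚ) *
    skewContPoly e nu lam * skewContPoly f nu.transpose mu / hookProd nu

/-- A semistandard filling of the cells of `lam` with values in `Fin n`:
weakly increasing along rows, strictly increasing down columns. -/
def IsSSYT (lam : YoungDiagram) {n : ℕ} (T : lam.cells → Fin n) : Prop :=
  (∀ a b : lam.cells, (a : ℕ × ℕ).1 = (b : ℕ × ℕ).1 → (a : ℕ × ℕ).2 ≤ (b : ℕ × ℕ).2 →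
    T a ≤ T b) ∧
  (∀ a b : lam.cells, (a : ℕ × ℕ).2 = (b : ℕ × ℕ).2 → (a : ℕ × ℕ).1 < (b : ℕ × ℕ).1 →
    T a < T b)

/-- The Schur polynomial `s_λ(x₁,…,x_n)` evaluated at `x`, as the generating
function of semistandard tableaux. -/
def schur (lam : YoungDiagram) {n : ℕ} (x : Fin n → ℚ) : ℚ :=
  ∑ᶠ T : {T : lam.cells → Fin n // IsSSYT lam T}, ∏ c : lam.cells, x (T.1 c)

/-- The generalized binomial coefficient `C(a, b) = a(a−1)⋯(a−b+1)/b!`. -/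
def gbinom (a : ℚ) (b : ℕ) : ℚ :=
  (∏ i ∈ Finset.range b, (a - i)) / (Nat.factorial b : ℚ)


/-- Lemma 3 of the paper: `(f | e×f − ν̃)·(e | ν) = (f | e×f)`. -/
theorem content_rect_compl (e f : ℕ) (ν : YoungDiagram)
    (h1 : ν.rowLen 0 ≤ f) (h2 : ν.colLen 0 ≤ e) :
    contPoly (f : ℚ) (rectCompl e f ν) * contPoly (e : ℚ) ν = contPoly (f : ℚ) (rect f e) := by
  classical
  have hmem : ∀ c : ℕ × ℕ, c ∈ ν.cells → c.1 < e ∧ c.2 < f := by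
    intro c hc
    rw [YoungDiagram.mem_cells] at hc
    constructor
    · have := YoungDiagram.mem_iff_lt_colLen.mp (show (c.1, c.2) ∈ ν from hc)
      exact lt_of_lt_of_le this (le_trans (ν.colLen_anti 0 c.2 (Nat.zero_le _)) h2)
    · have := YoungDiagram.mem_iff_lt_rowLen.mp (show (c.1, c.2) ∈ ν from hc)
      exact lt_of_lt_of_le this (le_trans (ν.rowLen_anti 0 c.1 (Nat.zero_le _)) h1)
  have hrect : (rect f e).cells = Finset.range f ×ˢ Finset.range e := rfl
  rw [show contPoly (f : ℚ) (rect f e)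
      = (∏ c ∈ (Finset.range f ×ˢ Finset.range e).filter
          (fun p => (f - 1 - p.1, e - 1 - p.2) ∉ ν.transpose), ((f : ℚ) + c.2 - c.1))
        * ∏ c ∈ (Finset.range f ×ˢ Finset.range e).filter
          (fun p => ¬ (f - 1 - p.1, e - 1 - p.2) ∉ ν.transpose), ((f : ℚ) + c.2 - c.1) from by
    rw [Finset.prod_filter_mul_prod_filter_not]; rfl]
  congr 1
  rw [contPoly]
  symm
  refine Finset.prod_nbij' (fun c => (e - 1 - c.2, f - 1 - c.1))
      (fun a => (f - 1 - a.2, e - 1 - a.1)) ?_ ?_ ?_ ?_ ?_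
  · intro c hc
    simp only [Finset.mem_filter, Finset.mem_product, Finset.mem_range, not_not,
      YoungDiagram.mem_transpose, Prod.swap] at hc
    exact hc.2
  · intro a ha
    have h := hmem a ha
    rw [YoungDiagram.mem_cells] at ha
    simp only [Finset.mem_filter, Finset.mem_product, Finset.mem_range, not_not,
      YoungDiagram.mem_transpose]
    refine ⟨⟨by omega, by omega⟩, ?_⟩
    have e1 : f - 1 - (f - 1 - a.2) = a.2 := by omega
    have e2 : e - 1 - (e - 1 - a.1) = a.1 := by omega
    rw [e1, e2]
    simpa using ha
  · intro c hc
    simp only [Finset.mem_filter, Finset.mem_product, Finset.mem_range] at hc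
    have : f - 1 - (f - 1 - c.1) = c.1 := by omega
    have : e - 1 - (e - 1 - c.2) = c.2 := by omega
    ext <;> simp <;> omega
  · intro a ha
    have h := hmem a ha
    ext <;> simp <;> omega
  · intro c hc
    simp only [Finset.mem_filter, Finset.mem_product, Finset.mem_range] at hc
    obtain ⟨⟨hc1, hc2⟩, _⟩ := hc
    have e1 : ((f - 1 - c.1 : ℕ) : ℚ) = (f : ℚ) - 1 - c.1 := by
      have : (1:ℕ) ≤ f := by omega
      push_cast [Nat.cast_sub (by omega : c.1 ≤ f - 1), Nat.cast_sub this]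
      ring
    have e2 : ((e - 1 - c.2 : ℕ) : ℚ) = (e : ℚ) - 1 - c.2 := by
      have : (1:ℕ) ≤ e := by omega
      push_cast [Nat.cast_sub (by omega : c.2 ≤ e - 1), Nat.cast_sub this]
      ring
    simp only [e1, e2]
    ring


end ChernTensor
end
end

section
/- For the rectangular partition e×f (f rows of length e), the product of (f + c(α)) over all boxes α equals the product of all hook lengths of e×f: (f | e×f) = h(e×f). -/
open scoped Classical BigOperators
noncomputable section

namespace ChernTensor

lemma rect_mem (f e i j : ℕ) : (i, j) ∈ rect f e ↔ i < f ∧ j < e := by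
  simp [rect, YoungDiagram.mem_cells, ← YoungDiagram.mem_cells]

lemma rect_rowLen (f e i : ℕ) (hi : i < f) : (rect f e).rowLen i = e := by
  have h := fun j => ((rect f e).mem_iff_lt_rowLen (i := i) (j := j)).symm.trans (rect_mem f e i j)
  have h1 := h ((rect f e).rowLen i)
  have h2 := h e
  simp [hi] at h1 h2
  omega

lemma rect_colLen (f e j : ℕ) (hj : j < e) : (rect f e).colLen j = f := by
  have h := fun i => ((rect f e).mem_iff_lt_colLen (i := i) (j := j)).symm.trans (rect_mem f e i j)
  have h1 := h ((rect f e).colLen j)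
  have h2 := h f
  simp [hj] at h1 h2
  omega

/-- For the rectangle `e×f` (with `f` rows of length `e`), `(f | e×f) = h(e×f)`. -/
theorem content_rect_eq_hook (e f : ℕ) :
    contPoly (f : ℚ) (rect f e) = hookProd (rect f e) := by
  have hcells : (rect f e).cells = Finset.range f ×ˢ Finset.range e := rfl
  unfold contPoly hookProd
  rw [hcells, Finset.prod_product, Finset.prod_product]
  refine Finset.prod_congr rfl fun i hi => ?_
  rw [Finset.mem_range] at hi
  rw [← Finset.prod_range_reflect (fun j => ((f:ℚ) + j - i)) e]
  refine Finset.prod_congr rfl fun j hj => ?_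
  rw [Finset.mem_range] at hj
  rw [rect_rowLen f e i hi, rect_colLen f e j hj]
  have h1 : (e - 1 - j : ℕ) = e - 1 - j := rfl
  have h2 : ((e + f - i - j - 1 : ℕ) : ℚ) = (e : ℚ) + f - i - j - 1 := by
    have : (e + f - i - j - 1 : ℕ) + (i + j + 1) = e + f := by omega
    have := congrArg (fun n : ℕ => (n : ℚ)) this
    push_cast at this
    linarith
  rw [h2]
  have h3 : ((e - 1 - j : ℕ) : ℚ) = (e : ℚ) - 1 - j := by
    have : (e - 1 - j : ℕ) + (j + 1) = e := by omega
    have := congrArg (fun n : ℕ => (n : ℚ)) this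
    push_cast at this
    linarith
  rw [h3]
  ring

end ChernTensor
end
end

section
/- For variables x₁,…,x_e and y₁,…,y_f, the Cauchy identity holds: ∏_{1≤i≤e, 1≤j≤f} (1 + x_i y_j) = ∑_{λ ⊆ e×f} s_λ(x₁,…,x_e) · s_{λ*}(y₁,…,y_f), where the sum is over partitions λ with λ₁ ≤ f and λ*₁ ≤ e. -/
open scoped Classical BigOperators
noncomputable section

namespace ChernTensor

/-- `μ ≤ ν` iff rowwise lengths dominate. -/
lemma le_iff_rowLen {μ ν : YoungDiagram} : μ ≤ ν ↔ ∀ i, μ.rowLen i ≤ ν.rowLen i := by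
  constructor
  · intro h i
    by_contra hlt
    push_neg at hlt
    have : (i, ν.rowLen i) ∈ μ := YoungDiagram.mem_iff_lt_rowLen.mpr hlt
    have := h this
    rw [YoungDiagram.mem_iff_lt_rowLen] at this
    omega
  · intro h c hc
    obtain ⟨i, j⟩ := c
    rw [YoungDiagram.mem_iff_lt_rowLen] at hc ⊢
    exact lt_of_lt_of_le hc (h i)

lemma rowLen_eq_of {μ : YoungDiagram} {i r : ℕ} (h : ∀ j, (i, j) ∈ μ ↔ j < r) :
    μ.rowLen i = r := by
  rcases Nat.lt_trichotomy (μ.rowLen i) r with hlt | he | hgt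
  · have := (h (μ.rowLen i)).mpr hlt
    rw [YoungDiagram.mem_iff_lt_rowLen] at this; omega
  · exact he
  · have : (i, r) ∈ μ := YoungDiagram.mem_iff_lt_rowLen.mpr hgt
    rw [h] at this; omega

lemma rowLen_transpose_colLen (μ : YoungDiagram) (i : ℕ) :
    μ.transpose.rowLen i = μ.colLen i := YoungDiagram.rowLen_transpose μ i

/-- cells of the transpose have the same cardinality -/
lemma card_transpose (μ : YoungDiagram) : μ.transpose.cells.card = μ.cells.card := by
  unfold YoungDiagram.transpose
  simp [Finset.card_map]

/-- rows beyond `colLen 0` are empty. -/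
lemma rowLen_eq_zero_of_le {μ : YoungDiagram} {i : ℕ} (h : μ.colLen 0 ≤ i) :
    μ.rowLen i = 0 := by
  by_contra hne
  have : (i, 0) ∈ μ := YoungDiagram.mem_iff_lt_rowLen.mpr (Nat.pos_of_ne_zero hne)
  rw [YoungDiagram.mem_iff_lt_colLen] at this
  omega

/-- the number of cells is the sum of the row lengths, for `N ≥ colLen 0`. -/
lemma card_eq_sum_rowLens (μ : YoungDiagram) {N : ℕ} (h : μ.colLen 0 ≤ N) :
    μ.cells.card = ∑ i ∈ Finset.range N, μ.rowLen i := by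
  classical
  have hmap : ∀ c ∈ μ.cells, Prod.fst c ∈ Finset.range N := by
    intro c hc
    rw [YoungDiagram.mem_cells] at hc
    have : (c.1, c.2) ∈ μ := by simpa using hc
    rw [YoungDiagram.mem_iff_lt_colLen] at this
    have h2 := μ.colLen_anti 0 c.2 (Nat.zero_le _)
    simp only [Finset.mem_range]
    omega
  rw [Finset.card_eq_sum_card_fiberwise hmap]
  refine Finset.sum_congr rfl fun i _ => ?_
  have : Finset.filter (fun c => Prod.fst c = i) μ.cells = μ.row i := by
    ext c
    simp only [Finset.mem_filter, YoungDiagram.mem_cells, YoungDiagram.mem_row_iff]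
  rw [this]
  exact (YoungDiagram.rowLen_eq_card μ).symm

/-- The finset of all Young diagrams contained in `D`. -/
def below (D : YoungDiagram) : Finset YoungDiagram :=
  D.cells.powerset.attach.image
    (fun s => if h : IsLowerSet (↑s.1 : Set (ℕ × ℕ)) then ⟨s.1, h⟩ else ⊥)

@[simp] lemma mem_below {D μ : YoungDiagram} : μ ∈ below D ↔ μ ≤ D := by
  constructor
  · rintro h
    simp only [below, Finset.mem_image, Finset.mem_attach, true_and] at h
    obtain ⟨s, rfl⟩ := h
    split_ifs with hl
    · intro c hc
      exact (Finset.mem_powerset.mp s.2) hc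
    · exact bot_le
  · intro h
    simp only [below, Finset.mem_image, Finset.mem_attach, true_and]
    refine ⟨⟨μ.cells, Finset.mem_powerset.mpr h⟩, ?_⟩
    rw [dif_pos μ.isLowerSet]


lemma schur_eq_sum (lam : YoungDiagram) {n : ℕ} (x : Fin n → ℚ) :
    schur lam x = ∑ T : {T : lam.cells → Fin n // IsSSYT lam T}, ∏ c : lam.cells, x (T.1 c) :=
  finsum_eq_sum_of_fintype _

lemma schur_eq_filter_sum (lam : YoungDiagram) {n : ℕ} (x : Fin n → ℚ) :
    schur lam x = ∑ T ∈ Finset.univ.filter (fun T : (↥lam.cells → Fin n) => IsSSYT lam T),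
      ∏ c : lam.cells, x (T c) := by
  rw [schur_eq_sum]
  exact ((Finset.univ.filter (fun T : (↥lam.cells → Fin n) => IsSSYT lam T)).sum_subtype
    (fun T => by simp) (fun T => ∏ c : lam.cells, x (T c))).symm

lemma ssyt_mono {lam : YoungDiagram} {n : ℕ} {T : lam.cells → Fin n} (hT : IsSSYT lam T)
    (a b : lam.cells) (h1 : (a : ℕ × ℕ).1 ≤ (b : ℕ × ℕ).1) (h2 : (a : ℕ × ℕ).2 ≤ (b : ℕ × ℕ).2) :
    T a ≤ T b := by
  have hmem : ((a : ℕ × ℕ).1, (b : ℕ × ℕ).2) ∈ lam.cells := by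
    rw [YoungDiagram.mem_cells]
    exact lam.up_left_mem h1 le_rfl (by rw [← YoungDiagram.mem_cells, Prod.mk.eta]; exact b.2)
  set c : lam.cells := ⟨((a : ℕ × ℕ).1, (b : ℕ × ℕ).2), hmem⟩
  have hac : T a ≤ T c := hT.1 a c rfl h2
  have hcb : T c ≤ T b := by
    rcases lt_or_eq_of_le h1 with h | h
    · exact le_of_lt (hT.2 c b rfl h)
    · have : c = b := by
        apply Subtype.ext
        have : ((b : ℕ × ℕ).1, (b : ℕ × ℕ).2) = (b : ℕ × ℕ) := Prod.mk.eta
        simp only [c, h, this]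
      rw [this]
  exact le_trans hac hcb

lemma schur_bot {n : ℕ} (x : Fin n → ℚ) : schur ⊥ x = 1 := by
  have hempty : IsEmpty ↥(⊥ : YoungDiagram).cells := by
    rw [YoungDiagram.cells_bot]; exact Finset.isEmpty_coe_sort.mpr rfl
  have hT : IsSSYT ⊥ (fun c : ↥(⊥ : YoungDiagram).cells => (hempty.elim c : Fin n)) :=
    ⟨fun a => hempty.elim a, fun a => hempty.elim a⟩
  rw [schur_eq_sum]
  have : ∀ S : {T : ↥(⊥ : YoungDiagram).cells → Fin n // IsSSYT ⊥ T},
      S = ⟨fun c => hempty.elim c, hT⟩ := by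
    intro S; apply Subtype.ext; funext c; exact hempty.elim c
  rw [Finset.sum_eq_single_of_mem ⟨fun c => hempty.elim c, hT⟩ (Finset.mem_univ _)
    (fun b _ hb => absurd (this b) hb)]
  rw [Finset.univ_eq_empty, Finset.prod_empty]

lemma schur_vanish {lam : YoungDiagram} {n : ℕ} (x : Fin n → ℚ) (h : n < lam.colLen 0) :
    schur lam x = 0 := by
  have : IsEmpty {T : lam.cells → Fin n // IsSSYT lam T} := by
    constructor
    rintro ⟨T, hT⟩
    have key : ∀ i (hi : i < lam.colLen 0),
        i ≤ (T ⟨(i, 0), by rw [YoungDiagram.mem_cells, YoungDiagram.mem_iff_lt_colLen]; exact hi⟩ : Fin n).val := by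
      intro i
      induction i with
      | zero => intro _; exact Nat.zero_le _
      | succ i ih =>
        intro hi
        have hi' : i < lam.colLen 0 := Nat.lt_of_succ_lt hi
        have hlt := hT.2 ⟨(i, 0), by rw [YoungDiagram.mem_cells, YoungDiagram.mem_iff_lt_colLen]; exact hi'⟩
          ⟨(i+1, 0), by rw [YoungDiagram.mem_cells, YoungDiagram.mem_iff_lt_colLen]; exact hi⟩
          rfl (Nat.lt_succ_self i)
        have := ih hi'
        omega
    have h1 := key (lam.colLen 0 - 1) (by omega)
    have h2 := (T ⟨(lam.colLen 0 - 1, 0), by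
      rw [YoungDiagram.mem_cells, YoungDiagram.mem_iff_lt_colLen]; omega⟩).isLt
    omega
  rw [schur_eq_sum, Finset.univ_eq_empty, Finset.sum_empty]

lemma schur_support_colLen {lam : YoungDiagram} {n : ℕ} {x : Fin n → ℚ}
    (h : schur lam x ≠ 0) : lam.colLen 0 ≤ n := by
  by_contra hc
  exact h (schur_vanish x (by omega))



/-- `ν/μ` is a horizontal strip. -/
def Hstrip (μ ν : YoungDiagram) : Prop :=
  μ ≤ ν ∧ ∀ i j, (i + 1, j) ∈ ν → (i, j) ∈ μ

/-- `ν/μ` is a vertical strip. -/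
def Vstrip (μ ν : YoungDiagram) : Prop :=
  μ ≤ ν ∧ ∀ i j, (i, j + 1) ∈ ν → (i, j) ∈ μ

lemma hstrip_iff {μ ν : YoungDiagram} :
    Hstrip μ ν ↔ ∀ i, μ.rowLen i ≤ ν.rowLen i ∧ ν.rowLen (i + 1) ≤ μ.rowLen i := by
  constructor
  · rintro ⟨hle, hs⟩ i
    refine ⟨le_iff_rowLen.mp hle i, ?_⟩
    by_contra hc
    push_neg at hc
    have : (i + 1, μ.rowLen i) ∈ ν := YoungDiagram.mem_iff_lt_rowLen.mpr hc
    have := hs _ _ this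
    rw [YoungDiagram.mem_iff_lt_rowLen] at this
    omega
  · intro h
    refine ⟨le_iff_rowLen.mpr (fun i => (h i).1), fun i j hm => ?_⟩
    rw [YoungDiagram.mem_iff_lt_rowLen] at hm ⊢
    have := (h i).2
    omega

lemma vstrip_iff {μ ν : YoungDiagram} :
    Vstrip μ ν ↔ ∀ i, μ.rowLen i ≤ ν.rowLen i ∧ ν.rowLen i ≤ μ.rowLen i + 1 := by
  constructor
  · rintro ⟨hle, hs⟩ i
    refine ⟨le_iff_rowLen.mp hle i, ?_⟩
    by_contra hc
    push_neg at hc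
    have : (i, μ.rowLen i + 1) ∈ ν := YoungDiagram.mem_iff_lt_rowLen.mpr hc
    have := hs _ _ this
    rw [YoungDiagram.mem_iff_lt_rowLen] at this
    omega
  · intro h
    refine ⟨le_iff_rowLen.mpr (fun i => (h i).1), fun i j hm => ?_⟩
    rw [YoungDiagram.mem_iff_lt_rowLen] at hm ⊢
    have := (h i).2
    omega

lemma hstrip_transpose_iff {μ ν : YoungDiagram} :
    Hstrip μ.transpose ν.transpose ↔ Vstrip μ ν := by
  unfold Hstrip Vstrip
  rw [YoungDiagram.transpose_le_iff]
  apply and_congr_right'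
  constructor
  · intro h i j hm
    have := h j i (by rw [YoungDiagram.mem_transpose]; exact hm)
    rwa [YoungDiagram.mem_transpose] at this
  · intro h i j hm
    rw [YoungDiagram.mem_transpose] at hm ⊢
    exact h j i hm

lemma hstrip_le {μ ν : YoungDiagram} (h : Hstrip μ ν) : μ ≤ ν := h.1
lemma vstrip_le {μ ν : YoungDiagram} (h : Vstrip μ ν) : μ ≤ ν := h.1

/-- the diagram with given row lengths (robust version). -/
def ofRowFn (l : ℕ → ℕ) (N : ℕ) : YoungDiagram where
  cells := (Finset.range N ×ˢ Finset.range (l 0)).filter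
    (fun c => ∀ i' ≤ c.1, c.2 < l i')
  isLowerSet := by
    rintro ⟨i', j'⟩ ⟨i, j⟩ hle hp
    simp only [Finset.coe_filter, Set.mem_setOf_eq, Finset.mem_product, Finset.mem_range] at hp ⊢
    obtain ⟨⟨hi, hj⟩, hall⟩ := hp
    obtain ⟨h1, h2⟩ := Prod.mk_le_mk.mp hle
    refine ⟨⟨lt_of_le_of_lt h1 hi, lt_of_le_of_lt h2 hj⟩, fun i'' hi'' => ?_⟩
    exact lt_of_le_of_lt h2 (hall i'' (le_trans hi'' h1))

lemma mem_ofRowFn {l : ℕ → ℕ} {N : ℕ} (hl : ∀ i, l (i + 1) ≤ l i) (hN : ∀ i, N ≤ i → l i = 0)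
    {i j : ℕ} : (i, j) ∈ ofRowFn l N ↔ j < l i := by
  have hanti : ∀ i j, i ≤ j → l j ≤ l i := fun i j hij => antitone_nat_of_succ_le hl hij
  show (i, j) ∈ (Finset.range N ×ˢ Finset.range (l 0)).filter
    (fun c => ∀ i' ≤ c.1, c.2 < l i') ↔ _
  simp only [ofRowFn, YoungDiagram.mem_mk, Finset.mem_filter, Finset.mem_product,
    Finset.mem_range]
  constructor
  · rintro ⟨_, h⟩; exact h i le_rfl
  · intro h
    refine ⟨⟨?_, lt_of_lt_of_le h (hanti 0 i (Nat.zero_le _))⟩, fun i' hi' =>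
      lt_of_lt_of_le h (hanti i' i hi')⟩
    by_contra hc
    push_neg at hc
    rw [hN i hc] at h
    omega

lemma rowLen_ofRowFn {l : ℕ → ℕ} {N : ℕ} (hl : ∀ i, l (i + 1) ≤ l i)
    (hN : ∀ i, N ≤ i → l i = 0) (i : ℕ) : (ofRowFn l N).rowLen i = l i :=
  rowLen_eq_of (fun _ => mem_ofRowFn hl hN)



def lowCells (lam : YoungDiagram) {n : ℕ} (T : ↥lam.cells → Fin (n + 1)) : Finset (ℕ × ℕ) :=
  (lam.cells.attach.filter (fun c => ((T c) : ℕ) < n)).image Subtype.val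

lemma mem_lowCells {lam : YoungDiagram} {n : ℕ} {T : ↥lam.cells → Fin (n + 1)} {p : ℕ × ℕ} :
    p ∈ lowCells lam T ↔ ∃ h : p ∈ lam.cells, ((T ⟨p, h⟩ : Fin (n + 1)) : ℕ) < n := by
  simp only [lowCells, Finset.mem_image, Finset.mem_filter, Finset.mem_attach, true_and]
  constructor
  · rintro ⟨c, hc, rfl⟩
    exact ⟨c.2, hc⟩
  · rintro ⟨h, hlt⟩
    exact ⟨⟨p, h⟩, hlt, rfl⟩

lemma isLowerSet_lowCells {lam : YoungDiagram} {n : ℕ} {T : ↥lam.cells → Fin (n + 1)}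
    (hT : IsSSYT lam T) : IsLowerSet (↑(lowCells lam T) : Set (ℕ × ℕ)) := by
  intro a b hle ha
  simp only [Finset.mem_coe, mem_lowCells] at ha ⊢
  obtain ⟨h, hlt⟩ := ha
  have hb : b ∈ lam.cells := by
    rw [YoungDiagram.mem_cells] at h ⊢
    exact lam.isLowerSet hle h
  refine ⟨hb, ?_⟩
  have := ssyt_mono hT ⟨b, hb⟩ ⟨a, h⟩ hle.1 hle.2
  have : ((T ⟨b, hb⟩ : Fin (n + 1)) : ℕ) ≤ ((T ⟨a, h⟩ : Fin (n + 1)) : ℕ) := this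
  omega

def lowDiagram (lam : YoungDiagram) {n : ℕ} (T : ↥lam.cells → Fin (n + 1)) : YoungDiagram :=
  if h : IsLowerSet (↑(lowCells lam T) : Set (ℕ × ℕ)) then ⟨lowCells lam T, h⟩ else ⊥

lemma lowDiagram_cells {lam : YoungDiagram} {n : ℕ} {T : ↥lam.cells → Fin (n + 1)}
    (hT : IsSSYT lam T) : (lowDiagram lam T).cells = lowCells lam T := by
  rw [lowDiagram, dif_pos (isLowerSet_lowCells hT)]

lemma hstrip_lowDiagram {lam : YoungDiagram} {n : ℕ} {T : ↥lam.cells → Fin (n + 1)}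
    (hT : IsSSYT lam T) : Hstrip (lowDiagram lam T) lam := by
  constructor
  · intro p hp
    have hp' : p ∈ (lowDiagram lam T).cells := hp
    rw [lowDiagram_cells hT, mem_lowCells] at hp'
    exact hp'.1
  · intro i j hm
    show (i, j) ∈ (lowDiagram lam T).cells
    rw [lowDiagram_cells hT, mem_lowCells]
    have hup : (i, j) ∈ lam.cells := lam.up_left_mem (Nat.le_succ i) le_rfl hm
    refine ⟨hup, ?_⟩
    have hstrict := hT.2 ⟨(i, j), hup⟩ ⟨(i + 1, j), hm⟩ rfl (Nat.lt_succ_self i)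
    have h1 : ((T ⟨(i, j), hup⟩ : Fin (n + 1)) : ℕ) < ((T ⟨(i + 1, j), hm⟩ : Fin (n + 1)) : ℕ) :=
      hstrict
    have h2 := (T ⟨(i + 1, j), hm⟩).isLt
    omega

set_option maxHeartbeats 1600000 in
lemma branching (lam : YoungDiagram) (e : ℕ) (x : Fin (e + 1) → ℚ) :
    schur lam x = ∑ μ ∈ below lam, (if Hstrip μ lam then
      schur μ (fun i : Fin e => x i.castSucc) *
        (x (Fin.last e)) ^ (lam.cells.card - μ.cells.card) else 0) := by
  rw [schur_eq_filter_sum]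
  rw [← Finset.sum_fiberwise_of_maps_to (g := fun T => lowDiagram lam T) (t := below lam)
    (fun T hT => by
      rw [mem_below]
      exact (hstrip_lowDiagram (Finset.mem_filter.mp hT).2).1)]
  refine Finset.sum_congr rfl fun μ hμ => ?_
  by_cases hH : Hstrip μ lam
  · rw [if_pos hH, schur_eq_filter_sum, Finset.sum_mul]
    have hsub : μ.cells ⊆ lam.cells := YoungDiagram.cells_subset_iff.mpr hH.1
    refine Finset.sum_bij
      (i := fun T hT => fun c : ↥μ.cells =>
        (⟨((T ⟨c.1, hsub c.2⟩ : Fin (e + 1)) : ℕ), by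
          have h2 := (Finset.mem_filter.mp hT).2
          have h1 := (Finset.mem_filter.mp (Finset.mem_filter.mp hT).1).2
          have : c.1 ∈ (lowDiagram lam T).cells := by rw [h2]; exact c.2
          rw [lowDiagram_cells h1, mem_lowCells] at this
          obtain ⟨h, hlt⟩ := this
          exact hlt⟩ : Fin e))
      ?_ ?_ ?_ ?_
    · -- maps to target
      intro T hT
      have h1 := (Finset.mem_filter.mp (Finset.mem_filter.mp hT).1).2
      simp only [Finset.mem_filter, Finset.mem_univ, true_and]
      constructor
      · intro a b hfst hsnd
        have := h1.1 ⟨a.1, hsub a.2⟩ ⟨b.1, hsub b.2⟩ hfst hsnd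
        exact this
      · intro a b hsnd hfst
        have := h1.2 ⟨a.1, hsub a.2⟩ ⟨b.1, hsub b.2⟩ hsnd hfst
        exact this
    · -- injectivity
      intro T1 hT1 T2 hT2 heq
      have hl1 := (Finset.mem_filter.mp (Finset.mem_filter.mp hT1).1).2
      have hl2 := (Finset.mem_filter.mp (Finset.mem_filter.mp hT2).1).2
      have hf1 := (Finset.mem_filter.mp hT1).2
      have hf2 := (Finset.mem_filter.mp hT2).2
      funext c
      by_cases hc : c.1 ∈ μ.cells
      · have h6 := congrFun heq ⟨c.1, hc⟩
        have hv : ((T1 ⟨c.1, hsub hc⟩ : Fin (e + 1)) : ℕ) = ((T2 ⟨c.1, hsub hc⟩ : Fin (e + 1)) : ℕ) := by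
          simpa using congrArg Fin.val h6
        have hceq : (⟨c.1, hsub hc⟩ : ↥lam.cells) = c := Subtype.ext rfl
        rw [hceq] at hv
        exact Fin.ext hv
      · -- both are equal to last
        have key : ∀ (T : ↥lam.cells → Fin (e + 1)), IsSSYT lam T → lowDiagram lam T = μ →
            T c = Fin.last e := by
          intro T hssyt hfib
          have : c.1 ∉ lowCells lam T := by
            rw [← lowDiagram_cells hssyt, hfib]; exact hc
          rw [mem_lowCells] at this
          push_neg at this
          have h3 := this c.2
          have h4 := (T ⟨c.1, c.2⟩).isLt
          have : (⟨c.1, c.2⟩ : ↥lam.cells) = c := Subtype.ext rfl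
          rw [this] at h3 h4
          apply Fin.ext
          simp only [Fin.val_last]
          omega
        rw [key T1 hl1 hf1, key T2 hl2 hf2]
    · -- surjectivity
      intro S hS
      have hSS := (Finset.mem_filter.mp hS).2
      set T : ↥lam.cells → Fin (e + 1) := fun c =>
        if h : c.1 ∈ μ.cells then (S ⟨c.1, h⟩).castSucc else Fin.last e with hTdef
      have hTval : ∀ (c : ↥lam.cells) (h : c.1 ∈ μ.cells), T c = (S ⟨c.1, h⟩).castSucc := by
        intro c h; rw [hTdef]; exact dif_pos h
      have hTval' : ∀ (c : ↥lam.cells), c.1 ∉ μ.cells → T c = Fin.last e := by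
        intro c h; rw [hTdef]; exact dif_neg h
      have hssyt : IsSSYT lam T := by
        constructor
        · intro a b hfst hsnd
          by_cases ha : a.1 ∈ μ.cells
          · by_cases hb : b.1 ∈ μ.cells
            · rw [hTval a ha, hTval b hb]
              have := hSS.1 ⟨a.1, ha⟩ ⟨b.1, hb⟩ hfst hsnd
              exact Fin.castSucc_le_castSucc_iff.mpr this
            · rw [hTval' b hb]; exact Fin.le_last _
          · have hb : b.1 ∉ μ.cells := by
              intro hb
              exact ha (μ.up_left_mem (le_of_eq hfst) hsnd hb)
            rw [hTval' a ha, hTval' b hb]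
        · intro a b hsnd hfst
          by_cases hb : b.1 ∈ μ.cells
          · have ha : a.1 ∈ μ.cells := μ.up_left_mem (le_of_lt hfst) (le_of_eq hsnd) hb
            rw [hTval a ha, hTval b hb]
            have := hSS.2 ⟨a.1, ha⟩ ⟨b.1, hb⟩ hsnd hfst
            exact Fin.castSucc_lt_castSucc_iff.mpr this
          · by_cases ha : a.1 ∈ μ.cells
            · rw [hTval a ha, hTval' b hb]
              exact Fin.castSucc_lt_last _
            · -- impossible: two cells of lam \ mu in the same column
              exfalso
              have hup : ((a : ℕ × ℕ).1 + 1, (a : ℕ × ℕ).2) ∈ lam := by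
                have hb' : ((b : ℕ × ℕ).1, (b : ℕ × ℕ).2) ∈ lam := by
                  rw [Prod.mk.eta]
                  exact b.2
                have := lam.up_left_mem (Nat.succ_le_of_lt hfst) le_rfl hb'
                rwa [hsnd]
              have := hH.2 _ _ hup
              rw [← YoungDiagram.mem_cells] at this
              rw [Prod.mk.eta] at this
              exact ha this
      have hfib : lowDiagram lam T = μ := by
        have hcells : lowCells lam T = μ.cells := by
          ext p
          rw [mem_lowCells]
          constructor
          · rintro ⟨h, hlt⟩
            by_contra hp
            rw [hTval' ⟨p, h⟩ hp] at hlt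
            simp at hlt
          · intro hp
            refine ⟨hsub hp, ?_⟩
            rw [hTval ⟨p, hsub hp⟩ hp]
            simp only [Fin.coe_castSucc]
            exact (S ⟨p, hp⟩).isLt
        rw [lowDiagram, dif_pos (by rw [hcells]; exact μ.isLowerSet)]
        ext1
        exact hcells
      refine ⟨T, ?_, ?_⟩
      · rw [Finset.mem_filter, Finset.mem_filter]
        exact ⟨⟨Finset.mem_univ _, hssyt⟩, hfib⟩
      · funext c
        apply Fin.ext
        simp only []
        rw [hTval ⟨c.1, hsub c.2⟩ c.2]
        simp [Fin.coe_castSucc]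
    · -- weights
      intro T hT
      have h1 := (Finset.mem_filter.mp (Finset.mem_filter.mp hT).1).2
      have hfib := (Finset.mem_filter.mp hT).2
      have hcells : lowCells lam T = μ.cells := by rw [← lowDiagram_cells h1, hfib]
      rw [show (∏ c : ↥lam.cells, x (T c)) = ∏ c ∈ lam.cells.attach, x (T c) by
        rw [Finset.univ_eq_attach]]
      rw [← Finset.prod_filter_mul_prod_filter_not lam.cells.attach
        (fun c => ((T c) : ℕ) < e) (fun c => x (T c))]
      congr 1
      · -- low part
        rw [show (∏ c : ↥μ.cells, x (Fin.castSucc _)) = ∏ c ∈ μ.cells.attach, _ by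
          rw [Finset.univ_eq_attach]]
        refine Finset.prod_bij (i := fun c hc => (⟨c.1, by
          rw [← hcells, mem_lowCells]
          exact ⟨c.2, (Finset.mem_filter.mp hc).2⟩⟩ : ↥μ.cells)) ?_ ?_ ?_ ?_
        · intro c hc; exact Finset.mem_attach _ _
        · intro c1 hc1 c2 hc2 heq
          exact Subtype.ext (by simpa using congrArg Subtype.val heq)
        · intro d hd
          have : d.1 ∈ lowCells lam T := by rw [hcells]; exact d.2
          rw [mem_lowCells] at this
          obtain ⟨h, hlt⟩ := this
          refine ⟨⟨d.1, h⟩, ?_, Subtype.ext rfl⟩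
          rw [Finset.mem_filter]
          exact ⟨Finset.mem_attach _ _, hlt⟩
        · intro c hc
          apply congrArg
          apply Fin.ext
          simp [Fin.coe_castSucc]
      · -- high part: all values are last
        have hconst : ∀ c ∈ lam.cells.attach.filter (fun c => ¬ ((T c) : ℕ) < e),
            x (T c) = x (Fin.last e) := by
          intro c hc
          have h2 := (Finset.mem_filter.mp hc).2
          have h3 := (T c).isLt
          congr 1
          apply Fin.ext
          simp only [Fin.val_last]
          omega
        rw [Finset.prod_congr rfl hconst, Finset.prod_const]
        congr 1
        have hcard1 : (lam.cells.attach.filter (fun c => ((T c) : ℕ) < e)).card = μ.cells.card := by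
          rw [← hcells, lowCells]
          rw [Finset.card_image_of_injective _ Subtype.val_injective]
        have hcard2 := Finset.card_filter_add_card_filter_not
          (s := lam.cells.attach) (p := fun c => ((T c) : ℕ) < e)
        rw [Finset.card_attach] at hcard2
        omega
  · rw [if_neg hH]
    have : (Finset.univ.filter (fun T : (↥lam.cells → Fin (e + 1)) => IsSSYT lam T)).filter
        (fun T => lowDiagram lam T = μ) = ∅ := by
      rw [Finset.filter_eq_empty_iff]
      intro T hT heq
      have h1 := (Finset.mem_filter.mp hT).2
      exact hH (heq ▸ hstrip_lowDiagram h1)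
    rw [this, Finset.sum_empty]


def arow (t u : ℚ) (m k c : ℕ) : ℚ :=
  (if k ≤ m ∧ m ≤ c then u ^ (m - k) else 0) +
  (if k ≤ m + 1 ∧ m + 1 ≤ c then t * u ^ (m + 1 - k) else 0)

def brow (t u : ℚ) (m m' k : ℕ) : ℚ :=
  (if m' ≤ k ∧ k ≤ m then u ^ (m - k) else 0) +
  (if 1 ≤ k ∧ m' + 1 ≤ k ∧ k ≤ m + 1 then t * u ^ (m + 1 - k) else 0)

def br (t u : ℚ) (m c : ℕ) : ℚ :=
  (if m ≤ c then 1 else 0) + (if m < c then t * u else 0)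

set_option maxHeartbeats 2000000 in
lemma local_id (t u : ℚ) {m m' k c : ℕ} (hm : m' ≤ m) (hc : k ≤ c) :
    arow t u m k c * br t u m' k = br t u m c * brow t u m m' k := by
  unfold arow brow br
  split_ifs <;>
    first
    | (exfalso; omega)
    | ring1
    | (rw [show m + 1 - k = (m - k) + 1 from by omega, pow_succ]; ring1)
    | (rw [show m + 1 - k = 0 from by omega]; ring1)
    | (rw [show m + 1 - k = 0 from by omega, show m - k = 0 from by omega]; ring1)
    | (rw [show m - k = 0 from by omega]; ring1)

def PA (t u : ℚ) (m k : ℕ → ℕ) : ℕ → ℕ → ℕ → ℚ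
  | 0, _, _ => 1
  | n + 1, j, c => arow t u (m j) (k j) c * PA t u m k n (j + 1) (k j)

def PB (t u : ℚ) (m k : ℕ → ℕ) : ℕ → ℕ → ℚ
  | 0, _ => 1
  | n + 1, j => brow t u (m j) (m (j + 1)) (k j) * PB t u m k n (j + 1)

lemma PA_eq_PB (t u : ℚ) (m k : ℕ → ℕ) (hm : ∀ i, m (i + 1) ≤ m i)
    (hk : ∀ i, k (i + 1) ≤ k i) :
    ∀ n j c, (∀ i, j + n ≤ i + 1 → m i = 0) → (∀ i, j + n ≤ i + 1 → k i = 0) → k j ≤ c →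
      PA t u m k (n + 1) j c = br t u (m j) c * PB t u m k (n + 1) j := by
  intro n
  induction n with
  | zero =>
    intro j c hm0 hk0 hc
    have h1 : m j = 0 := hm0 j (by omega)
    have h2 : k j = 0 := hk0 j (by omega)
    have h3 : m (j + 1) = 0 := hm0 (j + 1) (by omega)
    show arow t u (m j) (k j) c * 1 = br t u (m j) c * (brow t u (m j) (m (j + 1)) (k j) * 1)
    rw [h1, h2, h3]
    unfold arow brow br
    split_ifs <;> first | (exfalso; omega) | (norm_num; try ring1)
  | succ n ih =>
    intro j c hm0 hk0 hc
    have step : PA t u m k (n + 2) j c =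
        arow t u (m j) (k j) c * PA t u m k (n + 1) (j + 1) (k j) := rfl
    rw [step, ih (j + 1) (k j) (fun i hi => hm0 i (by omega)) (fun i hi => hk0 i (by omega))
      (hk j)]
    have loc := local_id t u (m := m j) (m' := m (j + 1)) (k := k j) (c := c) (hm j) hc
    have stepB : PB t u m k (n + 2) j =
        brow t u (m j) (m (j + 1)) (k j) * PB t u m k (n + 1) (j + 1) := rfl
    rw [stepB]
    calc arow t u (m j) (k j) c * (br t u (m (j + 1)) (k j) * PB t u m k (n + 1) (j + 1))
        = (arow t u (m j) (k j) c * br t u (m (j + 1)) (k j)) * PB t u m k (n + 1) (j + 1) := by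
          ring
      _ = (br t u (m j) c * brow t u (m j) (m (j + 1)) (k j)) * PB t u m k (n + 1) (j + 1) := by
          rw [loc]
      _ = br t u (m j) c * (brow t u (m j) (m (j + 1)) (k j) * PB t u m k (n + 1) (j + 1)) := by
          ring

lemma PA_eq_prod (t u : ℚ) (m k : ℕ → ℕ) :
    ∀ n j c, PA t u m k n j c =
      ∏ i ∈ Finset.range n, arow t u (m (j + i)) (k (j + i))
        (if i = 0 then c else k (j + i - 1)) := by
  intro n
  induction n with
  | zero => intro j c; simp [PA]
  | succ n ih =>
    intro j c
    rw [Finset.prod_range_succ']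
    have hF0 : arow t u (m (j + 0)) (k (j + 0)) (if 0 = 0 then c else k (j + 0 - 1)) =
        arow t u (m j) (k j) c := by norm_num
    rw [hF0]
    have heq : ∀ i ∈ Finset.range n,
        arow t u (m (j + (i + 1))) (k (j + (i + 1))) (if i + 1 = 0 then c else k (j + (i + 1) - 1)) =
        arow t u (m (j + 1 + i)) (k (j + 1 + i)) (if i = 0 then k j else k (j + 1 + i - 1)) := by
      intro i _
      have e1 : j + (i + 1) = j + 1 + i := by omega
      rw [e1]
      have e2 : (if i + 1 = 0 then c else k (j + 1 + i - 1)) =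
          (if i = 0 then k j else k (j + 1 + i - 1)) := by
        rw [if_neg (Nat.succ_ne_zero i)]
        rcases Nat.eq_zero_or_pos i with h | h
        · subst h; rw [if_pos rfl]; norm_num
        · rw [if_neg (by omega)]
      rw [e2]
    rw [Finset.prod_congr rfl heq]
    show PA t u m k (n + 1) j c = _
    rw [show PA t u m k (n + 1) j c = arow t u (m j) (k j) c * PA t u m k n (j + 1) (k j) from rfl,
      ih (j + 1) (k j)]
    ring

lemma PB_eq_prod (t u : ℚ) (m k : ℕ → ℕ) :
    ∀ n j, PB t u m k n j =
      ∏ i ∈ Finset.range n, brow t u (m (j + i)) (m (j + i + 1)) (k (j + i)) := by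
  intro n
  induction n with
  | zero => intro j; simp [PB]
  | succ n ih =>
    intro j
    rw [Finset.prod_range_succ']
    have hF0 : brow t u (m (j + 0)) (m (j + 0 + 1)) (k (j + 0)) =
        brow t u (m j) (m (j + 1)) (k j) := by norm_num
    rw [hF0]
    have heq : ∀ i ∈ Finset.range n,
        brow t u (m (j + (i + 1))) (m (j + (i + 1) + 1)) (k (j + (i + 1))) =
        brow t u (m (j + 1 + i)) (m (j + 1 + i + 1)) (k (j + 1 + i)) := by
      intro i _
      have e1 : j + (i + 1) = j + 1 + i := by omega
      rw [e1]
    rw [Finset.prod_congr rfl heq]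
    show PB t u m k (n + 1) j = _
    rw [show PB t u m k (n + 1) j = brow t u (m j) (m (j + 1)) (k j) * PB t u m k n (j + 1) from rfl,
      ih (j + 1)]
    ring



lemma eq_of_rowLen_eq {μ ν : YoungDiagram} (h : ∀ i, μ.rowLen i = ν.rowLen i) : μ = ν := by
  ext ⟨i, j⟩
  rw [YoungDiagram.mem_cells, YoungDiagram.mem_cells, YoungDiagram.mem_iff_lt_rowLen,
    YoungDiagram.mem_iff_lt_rowLen, h i]

lemma colLen_le_of_rowLen_eq_zero {μ : YoungDiagram} {i : ℕ} (h : μ.rowLen i = 0) :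
    μ.colLen 0 ≤ i := by
  by_contra hc
  push_neg at hc
  have : (i, 0) ∈ μ := YoungDiagram.mem_iff_lt_colLen.mpr hc
  rw [YoungDiagram.mem_iff_lt_rowLen] at this
  omega

lemma mem_rect {r c : ℕ} {p : ℕ × ℕ} : p ∈ rect r c ↔ p.1 < r ∧ p.2 < c := by
  obtain ⟨i, j⟩ := p
  show (i, j) ∈ Finset.range r ×ˢ Finset.range c ↔ _
  simp [rect, Finset.mem_product]

lemma le_rect_iff {μ : YoungDiagram} {r c : ℕ} :
    μ ≤ rect r c ↔ μ.colLen 0 ≤ r ∧ μ.rowLen 0 ≤ c := by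
  constructor
  · intro h
    constructor
    · rcases Nat.eq_zero_or_pos (μ.colLen 0) with h0 | h0
      · omega
      · have : (μ.colLen 0 - 1, 0) ∈ μ := YoungDiagram.mem_iff_lt_colLen.mpr (by omega)
        have h2 := h this
        rw [mem_rect] at h2
        omega
    · rcases Nat.eq_zero_or_pos (μ.rowLen 0) with h0 | h0
      · omega
      · have : (0, μ.rowLen 0 - 1) ∈ μ := YoungDiagram.mem_iff_lt_rowLen.mpr (by omega)
        have h2 := h this
        rw [mem_rect] at h2
        omega
  · rintro ⟨h1, h2⟩ ⟨i, j⟩ hp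
    rw [mem_rect]
    constructor
    · have := YoungDiagram.mem_iff_lt_colLen.mp hp
      have := μ.colLen_anti 0 j (Nat.zero_le _)
      omega
    · have := YoungDiagram.mem_iff_lt_rowLen.mp hp
      have := μ.rowLen_anti 0 i (Nat.zero_le _)
      omega

section KeySide

def NN (μ κ : YoungDiagram) : ℕ := μ.colLen 0 + κ.colLen 0 + 1
def CC (μ κ : YoungDiagram) : ℕ := μ.rowLen 0 + κ.rowLen 0 + 1
def capA (μ κ : YoungDiagram) (i : ℕ) : ℕ := if i = 0 then CC μ κ else κ.rowLen (i - 1)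
def lfun (μ : YoungDiagram) (s : Finset ℕ) : ℕ → ℕ :=
  fun i => if i ∈ s then μ.rowLen i + 1 else μ.rowLen i
def rfun (κ : YoungDiagram) (s : Finset ℕ) : ℕ → ℕ :=
  fun i => if i ∈ s then κ.rowLen i - 1 else κ.rowLen i
def validA (μ κ : YoungDiagram) (s : Finset ℕ) : Prop :=
  ∀ i ∈ Finset.range (NN μ κ + 1),
    if i ∈ s then (κ.rowLen i ≤ μ.rowLen i + 1 ∧ μ.rowLen i + 1 ≤ capA μ κ i)
    else (κ.rowLen i ≤ μ.rowLen i ∧ μ.rowLen i ≤ capA μ κ i)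
def validB (μ κ : YoungDiagram) (s : Finset ℕ) : Prop :=
  ∀ i ∈ Finset.range (NN μ κ + 1),
    if i ∈ s then (1 ≤ κ.rowLen i ∧ μ.rowLen (i + 1) + 1 ≤ κ.rowLen i ∧
      κ.rowLen i ≤ μ.rowLen i + 1)
    else (μ.rowLen (i + 1) ≤ κ.rowLen i ∧ κ.rowLen i ≤ μ.rowLen i)
def waT (μ κ : YoungDiagram) (t a : ℚ) (i : ℕ) : ℚ :=
  if κ.rowLen i ≤ μ.rowLen i + 1 ∧ μ.rowLen i + 1 ≤ capA μ κ i then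
    t * a ^ (μ.rowLen i + 1 - κ.rowLen i) else 0
def waF (μ κ : YoungDiagram) (a : ℚ) (i : ℕ) : ℚ :=
  if κ.rowLen i ≤ μ.rowLen i ∧ μ.rowLen i ≤ capA μ κ i then a ^ (μ.rowLen i - κ.rowLen i) else 0
def wbT (μ κ : YoungDiagram) (t a : ℚ) (i : ℕ) : ℚ :=
  if 1 ≤ κ.rowLen i ∧ μ.rowLen (i + 1) + 1 ≤ κ.rowLen i ∧ κ.rowLen i ≤ μ.rowLen i + 1 then
    t * a ^ (μ.rowLen i + 1 - κ.rowLen i) else 0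
def wbF (μ κ : YoungDiagram) (a : ℚ) (i : ℕ) : ℚ :=
  if μ.rowLen (i + 1) ≤ κ.rowLen i ∧ κ.rowLen i ≤ μ.rowLen i then
    a ^ (μ.rowLen i - κ.rowLen i) else 0

variable {μ κ : YoungDiagram}

lemma rowLen_N_zero_mu : ∀ i, NN μ κ ≤ i → μ.rowLen i = 0 := fun i hi =>
  rowLen_eq_zero_of_le (by unfold NN at hi; omega)
lemma rowLen_N_zero_ka : ∀ i, NN μ κ ≤ i → κ.rowLen i = 0 := fun i hi =>
  rowLen_eq_zero_of_le (by unfold NN at hi; omega)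

lemma lfun_anti (hsub : s ⊆ Finset.range (NN μ κ + 1)) (hval : validA μ κ s) :
    ∀ i, lfun μ s (i + 1) ≤ lfun μ s i := by
  intro i
  unfold lfun
  by_cases h1 : i + 1 ∈ s
  · have hir : i + 1 ∈ Finset.range (NN μ κ + 1) := hsub h1
    have h2 := hval (i + 1) hir
    rw [if_pos h1] at h2
    have hcap : capA μ κ (i + 1) = κ.rowLen i := by unfold capA; simp
    rw [hcap] at h2
    have h3 : κ.rowLen i ≤ μ.rowLen i + (if i ∈ s then 1 else 0) := by
      by_cases h4 : i ∈ Finset.range (NN μ κ + 1)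
      · have h5 := hval i h4
        split_ifs at h5 ⊢ <;> omega
      · simp only [Finset.mem_range, not_lt] at h4
        have := rowLen_N_zero_ka (μ := μ) (κ := κ) i (by omega)
        split_ifs <;> omega
    rw [if_pos h1]
    split_ifs at h3 ⊢ <;> omega
  · rw [if_neg h1]
    have h2 : μ.rowLen (i + 1) ≤ μ.rowLen i := μ.rowLen_anti i (i + 1) (by omega)
    split_ifs <;> omega

lemma lfun_zero (hsub : s ⊆ Finset.range (NN μ κ + 1)) :
    ∀ i, NN μ κ + 1 ≤ i → lfun μ s i = 0 := by
  intro i hi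
  unfold lfun
  have h1 : i ∉ s := fun hc => by have := Finset.mem_range.mp (hsub hc); omega
  rw [if_neg h1]
  exact rowLen_N_zero_mu (μ := μ) (κ := κ) i (by omega)

lemma rfun_anti (hsub : s ⊆ Finset.range (NN μ κ + 1)) (hval : validB μ κ s) :
    ∀ i, rfun κ s (i + 1) ≤ rfun κ s i := by
  intro i
  unfold rfun
  have hup : rfun κ s (i + 1) ≤ μ.rowLen (i + 1) := by
    unfold rfun
    by_cases h1 : i + 1 ∈ Finset.range (NN μ κ + 1)
    · have h2 := hval (i + 1) h1
      split_ifs at h2 ⊢ <;> omega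
    · simp only [Finset.mem_range, not_lt] at h1
      have := rowLen_N_zero_ka (μ := μ) (κ := κ) (i + 1) (by omega)
      have := rowLen_N_zero_mu (μ := μ) (κ := κ) (i + 1) (by omega)
      split_ifs <;> omega
  have hlow : μ.rowLen (i + 1) ≤ (if i ∈ s then κ.rowLen i - 1 else κ.rowLen i) := by
    by_cases h1 : i ∈ Finset.range (NN μ κ + 1)
    · have h2 := hval i h1
      split_ifs at h2 ⊢ <;> omega
    · simp only [Finset.mem_range, not_lt] at h1
      have := rowLen_N_zero_mu (μ := μ) (κ := κ) (i + 1) (by omega)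
      split_ifs <;> omega
  unfold rfun at hup
  omega

lemma rfun_zero (hsub : s ⊆ Finset.range (NN μ κ + 1)) :
    ∀ i, NN μ κ + 1 ≤ i → rfun κ s i = 0 := by
  intro i hi
  unfold rfun
  have h1 : i ∉ s := fun hc => by have := Finset.mem_range.mp (hsub hc); omega
  rw [if_neg h1]
  exact rowLen_N_zero_ka (μ := μ) (κ := κ) i (by omega)

variable (μ κ : YoungDiagram) (t a : ℚ)

set_option maxHeartbeats 1600000 in
lemma lam_side :
    (∑ᶠ lam : YoungDiagram, if Vstrip μ lam ∧ Hstrip κ lam then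
        t ^ (lam.cells.card - μ.cells.card) * a ^ (lam.cells.card - κ.cells.card) else 0) =
    ∏ i ∈ Finset.range (NN μ κ + 1), arow t a (μ.rowLen i) (κ.rowLen i) (capA μ κ i) := by
  classical
  have harow : ∀ i ∈ Finset.range (NN μ κ + 1),
      arow t a (μ.rowLen i) (κ.rowLen i) (capA μ κ i) = waT μ κ t a i + waF μ κ a i := by
    intro i _
    unfold arow waT waF
    ring
  rw [Finset.prod_congr rfl harow, Finset.prod_add]
  -- restrict to valid subsets
  rw [← Finset.sum_subset
    (Finset.filter_subset (validA μ κ) (Finset.range (NN μ κ + 1)).powerset)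
    (by
      intro s hs hns
      rw [Finset.mem_filter] at hns
      have hinvalid : ¬ validA μ κ s := fun hv => hns ⟨hs, hv⟩
      unfold validA at hinvalid
      simp only [not_forall] at hinvalid
      obtain ⟨i, hi, hbad⟩ := hinvalid
      by_cases his : i ∈ s
      · apply mul_eq_zero_of_left
        apply Finset.prod_eq_zero his
        unfold waT
        simp only [his, if_true] at hbad
        rw [if_neg hbad]
      · apply mul_eq_zero_of_right
        apply Finset.prod_eq_zero (Finset.mem_sdiff.mpr ⟨hi, his⟩)
        unfold waF
        simp only [his, if_false] at hbad
        rw [if_neg hbad])]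
  -- support of the finsum
  rw [finsum_eq_finset_sum_of_support_subset _
    (s := Finset.filter (fun lam => Vstrip μ lam ∧ Hstrip κ lam)
      (below (rect (NN μ κ + 1) (CC μ κ))))
    (by
      intro lam hlam
      simp only [Function.mem_support, ne_eq] at hlam
      have hP : Vstrip μ lam ∧ Hstrip κ lam := by
        by_contra hc
        rw [if_neg hc] at hlam
        exact hlam rfl
      simp only [Finset.coe_filter, Set.mem_setOf_eq, mem_below]
      refine ⟨?_, hP⟩
      rw [le_rect_iff]
      have hv := vstrip_iff.mp hP.1
      have hh := hstrip_iff.mp hP.2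
      constructor
      · apply colLen_le_of_rowLen_eq_zero
        have h1 : lam.rowLen (NN μ κ + 1) ≤ κ.rowLen (NN μ κ) := (hh (NN μ κ)).2
        have h2 : κ.rowLen (NN μ κ) = 0 := rowLen_N_zero_ka (μ := μ) _ le_rfl
        omega
      · have := (hv 0).2
        unfold CC
        omega)]
  -- the bijection
  refine Finset.sum_bij'
    (i := fun lam _ => (Finset.range (NN μ κ + 1)).filter
      (fun i => μ.rowLen i < lam.rowLen i))
    (j := fun s _ => ofRowFn (lfun μ s) (NN μ κ + 1))
    ?_ ?_ ?_ ?_ ?_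
  · -- forward maps into valid subsets
    intro lam hlam
    rw [Finset.mem_filter] at hlam
    obtain ⟨hbelow, hP⟩ := hlam
    have hv := vstrip_iff.mp hP.1
    have hh := hstrip_iff.mp hP.2
    rw [Finset.mem_filter, Finset.mem_powerset]
    refine ⟨Finset.filter_subset _ _, ?_⟩
    unfold validA
    intro i hi
    by_cases his : i ∈ (Finset.range (NN μ κ + 1)).filter (fun i => μ.rowLen i < lam.rowLen i)
    · have hlt : μ.rowLen i < lam.rowLen i := (Finset.mem_filter.mp his).2
      have hli : lam.rowLen i = μ.rowLen i + 1 := by have := (hv i).2; omega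
      rw [if_pos his]
      constructor
      · have := (hh i).1; omega
      · unfold capA
        rcases Nat.eq_zero_or_pos i with h0 | h0
        · subst h0
          simp only [if_pos]
          have := (hv 0).1
          unfold CC
          omega
        · rw [if_neg (by omega)]
          have := (hh (i - 1)).2
          have he : i - 1 + 1 = i := by omega
          rw [he] at this
          omega
    · have hnlt : ¬ μ.rowLen i < lam.rowLen i := by
        intro hc
        exact his (Finset.mem_filter.mpr ⟨hi, hc⟩)
      have hli : lam.rowLen i = μ.rowLen i := by have := (hv i).1; omega
      rw [if_neg his]
      constructor
      · have := (hh i).1; omega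
      · unfold capA
        rcases Nat.eq_zero_or_pos i with h0 | h0
        · subst h0
          simp only [if_pos]
          unfold CC
          omega
        · rw [if_neg (by omega)]
          have := (hh (i - 1)).2
          have he : i - 1 + 1 = i := by omega
          rw [he] at this
          omega
  · -- backward maps into the diagram set
    intro s hs
    rw [Finset.mem_filter, Finset.mem_powerset] at hs
    obtain ⟨hsub, hval⟩ := hs
    have hrl : ∀ i, (ofRowFn (lfun μ s) (NN μ κ + 1)).rowLen i = lfun μ s i :=
      rowLen_ofRowFn (lfun_anti hsub hval) (lfun_zero hsub)
    rw [Finset.mem_filter]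
    have hlmi : ∀ i, μ.rowLen i ≤ lfun μ s i ∧ lfun μ s i ≤ μ.rowLen i + 1 := by
      intro i
      unfold lfun
      split_ifs <;> omega
    have hkli : ∀ i, κ.rowLen i ≤ lfun μ s i ∧ lfun μ s (i + 1) ≤ κ.rowLen i := by
      intro i
      constructor
      · by_cases hi : i ∈ Finset.range (NN μ κ + 1)
        · have h1 := hval i hi
          unfold lfun
          split_ifs at h1 ⊢ <;> omega
        · simp only [Finset.mem_range, not_lt] at hi
          have h2 := rowLen_N_zero_ka (μ := μ) (κ := κ) i (by omega)
          have := (hlmi i).1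
          omega
      · by_cases hi : i + 1 ∈ Finset.range (NN μ κ + 1)
        · have h1 := hval (i + 1) hi
          have hcap : capA μ κ (i + 1) = κ.rowLen i := by unfold capA; simp
          rw [hcap] at h1
          unfold lfun
          split_ifs at h1 ⊢ <;> omega
        · simp only [Finset.mem_range, not_lt] at hi
          have h2 := lfun_zero (μ := μ) (κ := κ) hsub (i + 1) (by omega)
          omega
    constructor
    · rw [mem_below, le_rect_iff]
      constructor
      · apply colLen_le_of_rowLen_eq_zero
        rw [hrl (NN μ κ + 1)]
        exact lfun_zero (μ := μ) (κ := κ) hsub (NN μ κ + 1) le_rfl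
      · rw [hrl 0]
        have := (hlmi 0).2
        unfold CC
        omega
    · constructor
      · rw [vstrip_iff]
        intro i
        rw [hrl i]
        exact hlmi i
      · rw [hstrip_iff]
        intro i
        rw [hrl i, hrl (i + 1)]
        exact hkli i
  · -- left inverse
    intro lam hlam
    rw [Finset.mem_filter] at hlam
    obtain ⟨hbelow, hP⟩ := hlam
    have hv := vstrip_iff.mp hP.1
    have hτsub : (Finset.range (NN μ κ + 1)).filter (fun i => μ.rowLen i < lam.rowLen i)
        ⊆ Finset.range (NN μ κ + 1) := Finset.filter_subset _ _
    have hvalid : validA μ κ ((Finset.range (NN μ κ + 1)).filter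
        (fun i => μ.rowLen i < lam.rowLen i)) := by
      -- replicate forward proof quickly via vstrip/hstrip
      have hh := hstrip_iff.mp hP.2
      unfold validA
      intro i hi
      by_cases his : i ∈ (Finset.range (NN μ κ + 1)).filter (fun i => μ.rowLen i < lam.rowLen i)
      · have hlt : μ.rowLen i < lam.rowLen i := (Finset.mem_filter.mp his).2
        have hli : lam.rowLen i = μ.rowLen i + 1 := by have := (hv i).2; omega
        rw [if_pos his]
        constructor
        · have := (hh i).1; omega
        · unfold capA
          rcases Nat.eq_zero_or_pos i with h0 | h0
          · subst h0; simp only [if_pos]; unfold CC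
            have := (hv 0).1
            omega
          · rw [if_neg (by omega)]
            have := (hh (i - 1)).2
            have he : i - 1 + 1 = i := by omega
            rw [he] at this
            omega
      · have hnlt : ¬ μ.rowLen i < lam.rowLen i := fun hc =>
          his (Finset.mem_filter.mpr ⟨hi, hc⟩)
        have hli : lam.rowLen i = μ.rowLen i := by have := (hv i).1; omega
        rw [if_neg his]
        constructor
        · have := (hh i).1; omega
        · unfold capA
          rcases Nat.eq_zero_or_pos i with h0 | h0
          · subst h0; simp only [if_pos]; unfold CC; omega
          · rw [if_neg (by omega)]
            have := (hh (i - 1)).2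
            have he : i - 1 + 1 = i := by omega
            rw [he] at this
            omega
    apply eq_of_rowLen_eq
    intro i
    rw [rowLen_ofRowFn (lfun_anti hτsub hvalid) (lfun_zero hτsub) i]
    unfold lfun
    by_cases his : i ∈ (Finset.range (NN μ κ + 1)).filter (fun i => μ.rowLen i < lam.rowLen i)
    · rw [if_pos his]
      have := (Finset.mem_filter.mp his).2
      have := (hv i).2
      omega
    · rw [if_neg his]
      by_cases hi : i ∈ Finset.range (NN μ κ + 1)
      · have : ¬ μ.rowLen i < lam.rowLen i := fun hc => his (Finset.mem_filter.mpr ⟨hi, hc⟩)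
        have := (hv i).1
        omega
      · simp only [Finset.mem_range, not_lt] at hi
        have h1 : lam.rowLen i = 0 := by
          have h2 : lam ≤ rect (NN μ κ + 1) (CC μ κ) := mem_below.mp hbelow
          have h3 := (le_rect_iff.mp h2).1
          exact rowLen_eq_zero_of_le (by omega)
        have h4 := rowLen_N_zero_mu (μ := μ) (κ := κ) i (by omega)
        omega
  · -- right inverse
    intro s hs
    rw [Finset.mem_filter, Finset.mem_powerset] at hs
    obtain ⟨hsub, hval⟩ := hs
    have hrl : ∀ i, (ofRowFn (lfun μ s) (NN μ κ + 1)).rowLen i = lfun μ s i :=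
      rowLen_ofRowFn (lfun_anti hsub hval) (lfun_zero hsub)
    ext i
    simp only [Finset.mem_filter, Finset.mem_range]
    constructor
    · rintro ⟨hi, hlt⟩
      rw [hrl i] at hlt
      unfold lfun at hlt
      by_contra hc
      rw [if_neg hc] at hlt
      omega
    · intro his
      have hi := Finset.mem_range.mp (hsub his)
      refine ⟨hi, ?_⟩
      rw [hrl i]
      unfold lfun
      rw [if_pos his]
      omega
  · -- weights agree
    intro lam hlam
    rw [Finset.mem_filter] at hlam
    obtain ⟨hbelow, hP⟩ := hlam
    have hv := vstrip_iff.mp hP.1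
    have hh := hstrip_iff.mp hP.2
    rw [if_pos hP]
    have hτsub : (Finset.range (NN μ κ + 1)).filter (fun i => μ.rowLen i < lam.rowLen i)
        ⊆ Finset.range (NN μ κ + 1) := Finset.filter_subset _ _
    set τ := (Finset.range (NN μ κ + 1)).filter (fun i => μ.rowLen i < lam.rowLen i) with hτ
    have hcolam : lam.colLen 0 ≤ NN μ κ + 1 :=
      (le_rect_iff.mp (mem_below.mp hbelow)).1
    have hcolmu : μ.colLen 0 ≤ NN μ κ + 1 := by unfold NN; omega
    have hcolka : κ.colLen 0 ≤ NN μ κ + 1 := by unfold NN; omega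
    have hwaTval : ∀ i ∈ τ, waT μ κ t a i = t * a ^ (lam.rowLen i - κ.rowLen i) := by
      intro i hiτ
      have hlt := (Finset.mem_filter.mp hiτ).2
      have hli : lam.rowLen i = μ.rowLen i + 1 := by have := (hv i).2; omega
      unfold waT
      rw [if_pos ?_]
      · rw [← hli]
      · constructor
        · have := (hh i).1; omega
        · unfold capA
          rcases Nat.eq_zero_or_pos i with h0 | h0
          · subst h0; simp only [if_pos]; unfold CC
            have := (hv 0).1
            omega
          · rw [if_neg (by omega)]
            have := (hh (i - 1)).2
            have he : i - 1 + 1 = i := by omega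
            rw [he] at this
            omega
    have hwaFval : ∀ i ∈ Finset.range (NN μ κ + 1) \ τ,
        waF μ κ a i = a ^ (lam.rowLen i - κ.rowLen i) := by
      intro i hiτ
      rw [Finset.mem_sdiff] at hiτ
      obtain ⟨hi, hnτ⟩ := hiτ
      have hnlt : ¬ μ.rowLen i < lam.rowLen i := fun hc =>
        hnτ (Finset.mem_filter.mpr ⟨hi, hc⟩)
      have hli : lam.rowLen i = μ.rowLen i := by have := (hv i).1; omega
      unfold waF
      rw [if_pos ?_]
      · rw [← hli]
      · constructor
        · have := (hh i).1; omega
        · unfold capA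
          rcases Nat.eq_zero_or_pos i with h0 | h0
          · subst h0; simp only [if_pos]; unfold CC; omega
          · rw [if_neg (by omega)]
            have := (hh (i - 1)).2
            have he : i - 1 + 1 = i := by omega
            rw [he] at this
            omega
    rw [Finset.prod_congr rfl hwaTval, Finset.prod_congr rfl hwaFval]
    rw [Finset.prod_mul_distrib, Finset.prod_const]
    have hcardτ : τ.card = lam.cells.card - μ.cells.card := by
      have h1 : ∑ i ∈ Finset.range (NN μ κ + 1), (lam.rowLen i - μ.rowLen i) =
          ∑ i ∈ Finset.range (NN μ κ + 1), (if i ∈ τ then 1 else 0) := by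
        apply Finset.sum_congr rfl
        intro i hi
        by_cases his : i ∈ τ
        · rw [if_pos his]
          have := (Finset.mem_filter.mp his).2
          have := (hv i).2
          omega
        · rw [if_neg his]
          have : ¬ μ.rowLen i < lam.rowLen i := fun hc => his (Finset.mem_filter.mpr ⟨hi, hc⟩)
          have := (hv i).1
          omega
      have h2 : ∑ i ∈ Finset.range (NN μ κ + 1), (if i ∈ τ then 1 else 0) = τ.card := by
        rw [Finset.sum_ite_mem, Finset.inter_eq_right.mpr hτsub, Finset.card_eq_sum_ones]
      have h3 : ∑ i ∈ Finset.range (NN μ κ + 1), (lam.rowLen i - μ.rowLen i) =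
          ∑ i ∈ Finset.range (NN μ κ + 1), lam.rowLen i -
            ∑ i ∈ Finset.range (NN μ κ + 1), μ.rowLen i :=
        Finset.sum_tsub_distrib _ (fun i _ => (hv i).1)
      rw [← card_eq_sum_rowLens lam hcolam, ← card_eq_sum_rowLens μ hcolmu] at h3
      omega
    have hsumlk : ∑ i ∈ Finset.range (NN μ κ + 1), (lam.rowLen i - κ.rowLen i) =
        lam.cells.card - κ.cells.card := by
      have h3 : ∑ i ∈ Finset.range (NN μ κ + 1), (lam.rowLen i - κ.rowLen i) =
          ∑ i ∈ Finset.range (NN μ κ + 1), lam.rowLen i -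
            ∑ i ∈ Finset.range (NN μ κ + 1), κ.rowLen i :=
        Finset.sum_tsub_distrib _ (fun i _ => (hh i).1)
      rw [← card_eq_sum_rowLens lam hcolam, ← card_eq_sum_rowLens κ hcolka] at h3
      exact h3
    rw [hcardτ]
    have hsplit : (∏ i ∈ τ, a ^ (lam.rowLen i - κ.rowLen i)) *
        ∏ i ∈ Finset.range (NN μ κ + 1) \ τ, a ^ (lam.rowLen i - κ.rowLen i) =
        ∏ i ∈ Finset.range (NN μ κ + 1), a ^ (lam.rowLen i - κ.rowLen i) := by
      rw [mul_comm]
      exact Finset.prod_sdiff hτsub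
    calc t ^ (lam.cells.card - μ.cells.card) * a ^ (lam.cells.card - κ.cells.card)
        = t ^ (lam.cells.card - μ.cells.card) *
          ∏ i ∈ Finset.range (NN μ κ + 1), a ^ (lam.rowLen i - κ.rowLen i) := by
          rw [Finset.prod_pow_eq_pow_sum, hsumlk]
      _ = t ^ (lam.cells.card - μ.cells.card) *
          ((∏ i ∈ τ, a ^ (lam.rowLen i - κ.rowLen i)) *
            ∏ i ∈ Finset.range (NN μ κ + 1) \ τ, a ^ (lam.rowLen i - κ.rowLen i)) := by
          rw [hsplit]
      _ = _ := by ring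

set_option maxHeartbeats 1600000 in
lemma rho_side :
    (∑ᶠ rho : YoungDiagram, if Hstrip rho μ ∧ Vstrip rho κ then
        a ^ (μ.cells.card - rho.cells.card) * t ^ (κ.cells.card - rho.cells.card) else 0) =
    ∏ i ∈ Finset.range (NN μ κ + 1), brow t a (μ.rowLen i) (μ.rowLen (i + 1)) (κ.rowLen i) := by
  classical
  have hbrow : ∀ i ∈ Finset.range (NN μ κ + 1),
      brow t a (μ.rowLen i) (μ.rowLen (i + 1)) (κ.rowLen i) = wbT μ κ t a i + wbF μ κ a i := by
    intro i _
    unfold brow wbT wbF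
    ring
  rw [Finset.prod_congr rfl hbrow, Finset.prod_add]
  rw [← Finset.sum_subset
    (Finset.filter_subset (validB μ κ) (Finset.range (NN μ κ + 1)).powerset)
    (by
      intro s hs hns
      rw [Finset.mem_filter] at hns
      have hinvalid : ¬ validB μ κ s := fun hv => hns ⟨hs, hv⟩
      unfold validB at hinvalid
      simp only [not_forall] at hinvalid
      obtain ⟨i, hi, hbad⟩ := hinvalid
      by_cases his : i ∈ s
      · apply mul_eq_zero_of_left
        apply Finset.prod_eq_zero his
        unfold wbT
        simp only [his, if_true] at hbad
        rw [if_neg hbad]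
      · apply mul_eq_zero_of_right
        apply Finset.prod_eq_zero (Finset.mem_sdiff.mpr ⟨hi, his⟩)
        unfold wbF
        simp only [his, if_false] at hbad
        rw [if_neg hbad])]
  rw [finsum_eq_finset_sum_of_support_subset _
    (s := Finset.filter (fun rho => Hstrip rho μ ∧ Vstrip rho κ)
      (below (rect (NN μ κ + 1) (CC μ κ))))
    (by
      intro rho hrho
      simp only [Function.mem_support, ne_eq] at hrho
      have hP : Hstrip rho μ ∧ Vstrip rho κ := by
        by_contra hc
        rw [if_neg hc] at hrho
        exact hrho rfl
      simp only [Finset.coe_filter, Set.mem_setOf_eq, mem_below]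
      refine ⟨?_, hP⟩
      have hmu : μ ≤ rect (NN μ κ + 1) (CC μ κ) := by
        rw [le_rect_iff]
        constructor
        · unfold NN; omega
        · unfold CC; omega
      exact le_trans hP.1.1 hmu)]
  refine Finset.sum_bij'
    (i := fun rho _ => (Finset.range (NN μ κ + 1)).filter
      (fun i => rho.rowLen i < κ.rowLen i))
    (j := fun s _ => ofRowFn (rfun κ s) (NN μ κ + 1))
    ?_ ?_ ?_ ?_ ?_
  · -- forward into valid subsets
    intro rho hrho
    rw [Finset.mem_filter] at hrho
    obtain ⟨hbelow, hP⟩ := hrho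
    have hh := hstrip_iff.mp hP.1
    have hv := vstrip_iff.mp hP.2
    rw [Finset.mem_filter, Finset.mem_powerset]
    refine ⟨Finset.filter_subset _ _, ?_⟩
    unfold validB
    intro i hi
    by_cases his : i ∈ (Finset.range (NN μ κ + 1)).filter (fun i => rho.rowLen i < κ.rowLen i)
    · have hlt : rho.rowLen i < κ.rowLen i := (Finset.mem_filter.mp his).2
      have hri : rho.rowLen i = κ.rowLen i - 1 := by have := (hv i).2; omega
      rw [if_pos his]
      refine ⟨by omega, ?_, ?_⟩
      · have := (hh (i + 1)).2
        have := (hh i).2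
        omega
      · have := (hh i).1
        omega
    · have hnlt : ¬ rho.rowLen i < κ.rowLen i := fun hc =>
        his (Finset.mem_filter.mpr ⟨hi, hc⟩)
      have hri : rho.rowLen i = κ.rowLen i := by have := (hv i).1; omega
      rw [if_neg his]
      constructor
      · have := (hh i).2
        omega
      · have := (hh i).1
        omega
  · -- backward into the diagram set
    intro s hs
    rw [Finset.mem_filter, Finset.mem_powerset] at hs
    obtain ⟨hsub, hval⟩ := hs
    have hrl : ∀ i, (ofRowFn (rfun κ s) (NN μ κ + 1)).rowLen i = rfun κ s i :=
      rowLen_ofRowFn (rfun_anti (μ := μ) hsub hval) (rfun_zero (μ := μ) hsub)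
    rw [Finset.mem_filter]
    have hfacts : ∀ i, (rfun κ s i ≤ μ.rowLen i ∧ μ.rowLen (i + 1) ≤ rfun κ s i) ∧
        (rfun κ s i ≤ κ.rowLen i ∧ κ.rowLen i ≤ rfun κ s i + 1) := by
      intro i
      by_cases hi : i ∈ Finset.range (NN μ κ + 1)
      · have h1 := hval i hi
        unfold validB at h1
        unfold rfun
        by_cases his : i ∈ s
        · simp only [his, if_true] at h1 ⊢
          have h2 := hval i hi
          omega
        · simp only [his, if_false] at h1 ⊢
          omega
      · simp only [Finset.mem_range, not_lt] at hi
        have h2 := rowLen_N_zero_ka (μ := μ) (κ := κ) i (by omega)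
        have h3 := rowLen_N_zero_mu (μ := μ) (κ := κ) (i + 1) (by omega)
        have h4 : i ∉ s := fun hc => by have := Finset.mem_range.mp (hsub hc); omega
        unfold rfun
        simp only [h4, if_false]
        have h5 := μ.rowLen_anti i (i + 1) (by omega)
        omega
    constructor
    · rw [mem_below, le_rect_iff]
      constructor
      · apply colLen_le_of_rowLen_eq_zero
        rw [hrl (NN μ κ + 1)]
        exact rfun_zero (μ := μ) hsub (NN μ κ + 1) le_rfl
      · rw [hrl 0]
        have := ((hfacts 0).2).1
        unfold CC
        omega
    · constructor
      · rw [hstrip_iff]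
        intro i
        rw [hrl i]
        exact (hfacts i).1
      · rw [vstrip_iff]
        intro i
        rw [hrl i]
        exact (hfacts i).2
  · -- left inverse
    intro rho hrho
    rw [Finset.mem_filter] at hrho
    obtain ⟨hbelow, hP⟩ := hrho
    have hh := hstrip_iff.mp hP.1
    have hv := vstrip_iff.mp hP.2
    have hτsub : (Finset.range (NN μ κ + 1)).filter (fun i => rho.rowLen i < κ.rowLen i)
        ⊆ Finset.range (NN μ κ + 1) := Finset.filter_subset _ _
    have hvalid : validB μ κ ((Finset.range (NN μ κ + 1)).filter
        (fun i => rho.rowLen i < κ.rowLen i)) := by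
      unfold validB
      intro i hi
      by_cases his : i ∈ (Finset.range (NN μ κ + 1)).filter (fun i => rho.rowLen i < κ.rowLen i)
      · have hlt : rho.rowLen i < κ.rowLen i := (Finset.mem_filter.mp his).2
        rw [if_pos his]
        refine ⟨by omega, ?_, ?_⟩
        · have := (hh i).2
          have := (hv i).2
          omega
        · have := (hh i).1
          have := (hv i).2
          omega
      · have hnlt : ¬ rho.rowLen i < κ.rowLen i := fun hc =>
          his (Finset.mem_filter.mpr ⟨hi, hc⟩)
        rw [if_neg his]
        constructor
        · have := (hh i).2
          have := (hv i).1
          omega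
        · have := (hh i).1
          have := (hv i).1
          omega
    apply eq_of_rowLen_eq
    intro i
    rw [rowLen_ofRowFn (rfun_anti (μ := μ) hτsub hvalid) (rfun_zero (μ := μ) hτsub) i]
    unfold rfun
    by_cases his : i ∈ (Finset.range (NN μ κ + 1)).filter (fun i => rho.rowLen i < κ.rowLen i)
    · rw [if_pos his]
      have := (Finset.mem_filter.mp his).2
      have := (hv i).2
      omega
    · rw [if_neg his]
      by_cases hi : i ∈ Finset.range (NN μ κ + 1)
      · have : ¬ rho.rowLen i < κ.rowLen i := fun hc => his (Finset.mem_filter.mpr ⟨hi, hc⟩)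
        have := (hv i).1
        omega
      · simp only [Finset.mem_range, not_lt] at hi
        have h2 := rowLen_N_zero_ka (μ := μ) (κ := κ) i (by omega)
        have h3 := rowLen_N_zero_mu (μ := μ) (κ := κ) i (by omega)
        have h4 := (hh i).1
        omega
  · -- right inverse
    intro s hs
    rw [Finset.mem_filter, Finset.mem_powerset] at hs
    obtain ⟨hsub, hval⟩ := hs
    have hrl : ∀ i, (ofRowFn (rfun κ s) (NN μ κ + 1)).rowLen i = rfun κ s i :=
      rowLen_ofRowFn (rfun_anti (μ := μ) hsub hval) (rfun_zero (μ := μ) hsub)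
    ext i
    simp only [Finset.mem_filter, Finset.mem_range]
    constructor
    · rintro ⟨hi, hlt⟩
      rw [hrl i] at hlt
      unfold rfun at hlt
      by_contra hc
      rw [if_neg hc] at hlt
      omega
    · intro his
      have hi := Finset.mem_range.mp (hsub his)
      refine ⟨hi, ?_⟩
      rw [hrl i]
      unfold rfun
      rw [if_pos his]
      have h1 := hval i (Finset.mem_range.mpr hi)
      unfold validB at h1
      simp only [his, if_true] at h1
      omega
  · -- weights agree
    intro rho hrho
    rw [Finset.mem_filter] at hrho
    obtain ⟨hbelow, hP⟩ := hrho
    have hh := hstrip_iff.mp hP.1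
    have hv := vstrip_iff.mp hP.2
    rw [if_pos hP]
    have hτsub : (Finset.range (NN μ κ + 1)).filter (fun i => rho.rowLen i < κ.rowLen i)
        ⊆ Finset.range (NN μ κ + 1) := Finset.filter_subset _ _
    set τ := (Finset.range (NN μ κ + 1)).filter (fun i => rho.rowLen i < κ.rowLen i) with hτ
    have hcolrho : rho.colLen 0 ≤ NN μ κ + 1 :=
      (le_rect_iff.mp (mem_below.mp hbelow)).1
    have hcolmu : μ.colLen 0 ≤ NN μ κ + 1 := by unfold NN; omega
    have hcolka : κ.colLen 0 ≤ NN μ κ + 1 := by unfold NN; omega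
    have hwbTval : ∀ i ∈ τ, wbT μ κ t a i = t * a ^ (μ.rowLen i - rho.rowLen i) := by
      intro i hiτ
      have hlt := (Finset.mem_filter.mp hiτ).2
      have hri : rho.rowLen i = κ.rowLen i - 1 := by have := (hv i).2; omega
      have h1 := (hh i).1
      have h2 := (hh i).2
      unfold wbT
      rw [if_pos ?_]
      · rw [show μ.rowLen i + 1 - κ.rowLen i = μ.rowLen i - rho.rowLen i from by omega]
      · refine ⟨by omega, by omega, by omega⟩
    have hwbFval : ∀ i ∈ Finset.range (NN μ κ + 1) \ τ,
        wbF μ κ a i = a ^ (μ.rowLen i - rho.rowLen i) := by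
      intro i hiτ
      rw [Finset.mem_sdiff] at hiτ
      obtain ⟨hi, hnτ⟩ := hiτ
      have hnlt : ¬ rho.rowLen i < κ.rowLen i := fun hc =>
        hnτ (Finset.mem_filter.mpr ⟨hi, hc⟩)
      have hri : rho.rowLen i = κ.rowLen i := by have := (hv i).1; omega
      unfold wbF
      rw [if_pos ?_]
      · rw [← hri]
      · constructor
        · have := (hh i).2
          omega
        · have := (hh i).1
          omega
    rw [Finset.prod_congr rfl hwbTval, Finset.prod_congr rfl hwbFval]
    rw [Finset.prod_mul_distrib, Finset.prod_const]
    have hcardτ : τ.card = κ.cells.card - rho.cells.card := by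
      have h1 : ∑ i ∈ Finset.range (NN μ κ + 1), (κ.rowLen i - rho.rowLen i) =
          ∑ i ∈ Finset.range (NN μ κ + 1), (if i ∈ τ then 1 else 0) := by
        apply Finset.sum_congr rfl
        intro i hi
        by_cases his : i ∈ τ
        · rw [if_pos his]
          have := (Finset.mem_filter.mp his).2
          have := (hv i).2
          omega
        · rw [if_neg his]
          have : ¬ rho.rowLen i < κ.rowLen i := fun hc => his (Finset.mem_filter.mpr ⟨hi, hc⟩)
          have := (hv i).1
          omega
      have h2 : ∑ i ∈ Finset.range (NN μ κ + 1), (if i ∈ τ then 1 else 0) = τ.card := by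
        rw [Finset.sum_ite_mem, Finset.inter_eq_right.mpr hτsub, Finset.card_eq_sum_ones]
      have h3 : ∑ i ∈ Finset.range (NN μ κ + 1), (κ.rowLen i - rho.rowLen i) =
          ∑ i ∈ Finset.range (NN μ κ + 1), κ.rowLen i -
            ∑ i ∈ Finset.range (NN μ κ + 1), rho.rowLen i :=
        Finset.sum_tsub_distrib _ (fun i _ => (hv i).1)
      rw [← card_eq_sum_rowLens κ hcolka, ← card_eq_sum_rowLens rho hcolrho] at h3
      omega
    have hsumlk : ∑ i ∈ Finset.range (NN μ κ + 1), (μ.rowLen i - rho.rowLen i) =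
        μ.cells.card - rho.cells.card := by
      have h3 : ∑ i ∈ Finset.range (NN μ κ + 1), (μ.rowLen i - rho.rowLen i) =
          ∑ i ∈ Finset.range (NN μ κ + 1), μ.rowLen i -
            ∑ i ∈ Finset.range (NN μ κ + 1), rho.rowLen i :=
        Finset.sum_tsub_distrib _ (fun i _ => (hh i).1)
      rw [← card_eq_sum_rowLens μ hcolmu, ← card_eq_sum_rowLens rho hcolrho] at h3
      exact h3
    rw [hcardτ]
    have hsplit : (∏ i ∈ τ, a ^ (μ.rowLen i - rho.rowLen i)) *
        ∏ i ∈ Finset.range (NN μ κ + 1) \ τ, a ^ (μ.rowLen i - rho.rowLen i) =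
        ∏ i ∈ Finset.range (NN μ κ + 1), a ^ (μ.rowLen i - rho.rowLen i) := by
      rw [mul_comm]
      exact Finset.prod_sdiff hτsub
    calc a ^ (μ.cells.card - rho.cells.card) * t ^ (κ.cells.card - rho.cells.card)
        = (∏ i ∈ Finset.range (NN μ κ + 1), a ^ (μ.rowLen i - rho.rowLen i)) *
            t ^ (κ.cells.card - rho.cells.card) := by
          rw [Finset.prod_pow_eq_pow_sum, hsumlk]
      _ = ((∏ i ∈ τ, a ^ (μ.rowLen i - rho.rowLen i)) *
            ∏ i ∈ Finset.range (NN μ κ + 1) \ τ, a ^ (μ.rowLen i - rho.rowLen i)) *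
            t ^ (κ.cells.card - rho.cells.card) := by
          rw [hsplit]
      _ = _ := by ring

end KeySide


lemma key (μ κ : YoungDiagram) (t a : ℚ) :
    (∑ᶠ lam : YoungDiagram, if Vstrip μ lam ∧ Hstrip κ lam then
        t ^ (lam.cells.card - μ.cells.card) * a ^ (lam.cells.card - κ.cells.card) else 0) =
    (1 + t * a) *
      ∑ᶠ rho : YoungDiagram, if Hstrip rho μ ∧ Vstrip rho κ then
        a ^ (μ.cells.card - rho.cells.card) * t ^ (κ.cells.card - rho.cells.card) else 0 := by
  rw [lam_side, rho_side]
  have h1 : (∏ i ∈ Finset.range (NN μ κ + 1), arow t a (μ.rowLen i) (κ.rowLen i) (capA μ κ i))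
      = PA t a μ.rowLen κ.rowLen (NN μ κ + 1) 0 (CC μ κ) := by
    rw [PA_eq_prod]
    apply Finset.prod_congr rfl
    intro i _
    unfold capA
    norm_num
  have h2 : (∏ i ∈ Finset.range (NN μ κ + 1),
        brow t a (μ.rowLen i) (μ.rowLen (i + 1)) (κ.rowLen i))
      = PB t a μ.rowLen κ.rowLen (NN μ κ + 1) 0 := by
    rw [PB_eq_prod]
    apply Finset.prod_congr rfl
    intro i _
    norm_num
  rw [h1, h2]
  rw [PA_eq_PB t a μ.rowLen κ.rowLen (fun i => μ.rowLen_anti i (i + 1) (by omega))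
    (fun i => κ.rowLen_anti i (i + 1) (by omega)) (NN μ κ) 0 (CC μ κ)
    (fun i hi => rowLen_eq_zero_of_le (μ := μ) (by unfold NN at hi; omega))
    (fun i hi => rowLen_eq_zero_of_le (μ := κ) (by unfold NN at hi; omega))
    (by unfold CC; omega)]
  congr 1
  unfold br CC
  rw [if_pos (by omega), if_pos (by omega)]

lemma colLen_pos_of_ne_bot {lam : YoungDiagram} (h : lam ≠ ⊥) : 0 < lam.colLen 0 := by
  have hne : lam.cells.Nonempty := by
    by_contra hc
    rw [Finset.not_nonempty_iff_eq_empty] at hc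
    exact h (by ext1; rw [hc, YoungDiagram.cells_bot])
  obtain ⟨c, hc⟩ := hne
  rw [YoungDiagram.mem_cells] at hc
  have : (0, 0) ∈ lam := lam.up_left_mem (Nat.zero_le _) (Nat.zero_le _)
    (by rw [← Prod.mk.eta (p := c)] at hc; exact hc)
  rw [YoungDiagram.mem_iff_lt_colLen] at this
  omega

lemma hstrip_colLen {κ lam : YoungDiagram} (h : Hstrip κ lam) :
    lam.colLen 0 ≤ κ.colLen 0 + 1 := by
  by_contra hc
  push_neg at hc
  have h1 : (κ.colLen 0 + 1, 0) ∈ lam := YoungDiagram.mem_iff_lt_colLen.mpr (by omega)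
  have h2 := h.2 _ _ h1
  rw [YoungDiagram.mem_iff_lt_colLen] at h2
  omega

lemma vstrip_bot_iff {ν : YoungDiagram} : Vstrip ν ⊥ ↔ ν = ⊥ := by
  constructor
  · intro h
    exact le_bot_iff.mp h.1
  · rintro rfl
    exact ⟨le_rfl, fun i j hm => absurd hm (YoungDiagram.notMem_bot _)⟩

set_option maxHeartbeats 3000000 in
lemma pieri : ∀ (e : ℕ) (ν : YoungDiagram) (t : ℚ) (x : Fin e → ℚ),
    (∑ᶠ lam : YoungDiagram, if Vstrip ν lam then
        t ^ (lam.cells.card - ν.cells.card) * schur lam x else 0) =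
    schur ν x * ∏ i, (1 + t * x i) := by
  intro e
  induction e with
  | zero =>
    intro ν t x
    have hzero : ∀ lam : YoungDiagram, lam ≠ ⊥ → schur lam x = 0 := fun lam h =>
      schur_vanish x (colLen_pos_of_ne_bot h)
    rw [finsum_eq_single _ ⊥ (fun lam hlam => by
      by_cases hV : Vstrip ν lam
      · rw [if_pos hV, hzero lam hlam, mul_zero]
      · rw [if_neg hV])]
    rw [Finset.univ_eq_empty, Finset.prod_empty, mul_one]
    by_cases hν : ν = ⊥
    · subst hν
      rw [if_pos (vstrip_bot_iff.mpr rfl), schur_bot]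
      simp
    · rw [if_neg (fun hc => hν (vstrip_bot_iff.mp hc)), hzero ν hν]
  | succ e ih =>
    intro ν t x
    set x' : Fin e → ℚ := fun i => x i.castSucc with hx'
    set xe : ℚ := x (Fin.last e) with hxe
    set A : Finset YoungDiagram := below (rect (e + 1 + 1) (ν.rowLen 0 + 1)) with hA
    have hmemA : ∀ lam : YoungDiagram, lam ∈ A ↔
        lam.colLen 0 ≤ e + 1 + 1 ∧ lam.rowLen 0 ≤ ν.rowLen 0 + 1 := by
      intro lam
      rw [hA, mem_below, le_rect_iff]
    -- Step 1 : restrict to A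
    rw [finsum_eq_finset_sum_of_support_subset _
      (s := A)
      (by
        intro lam hlam
        simp only [Function.mem_support, ne_eq] at hlam
        have hV : Vstrip ν lam := by
          by_contra hc
          rw [if_neg hc] at hlam
          exact hlam rfl
        have hs : schur lam x ≠ 0 := by
          intro hc
          rw [if_pos hV, hc, mul_zero] at hlam
          exact hlam rfl
        simp only [Finset.mem_coe]
        rw [hmemA]
        constructor
        · have := schur_support_colLen hs
          omega
        · have := (vstrip_iff.mp hV 0).2
          omega)]
    -- Step 2 : branching on each lam, extended to A
    have hstep2 : ∀ lam ∈ A, (if Vstrip ν lam then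
        t ^ (lam.cells.card - ν.cells.card) * schur lam x else 0) =
        ∑ κ ∈ A, (if Vstrip ν lam ∧ Hstrip κ lam then
          t ^ (lam.cells.card - ν.cells.card) * xe ^ (lam.cells.card - κ.cells.card) *
            schur κ x' else 0) := by
      intro lam hlamA
      by_cases hV : Vstrip ν lam
      · rw [if_pos hV, branching lam e x]
        rw [← Finset.sum_subset (Finset.filter_subset (fun κ => κ ≤ lam) A)
          (f := fun κ => if Vstrip ν lam ∧ Hstrip κ lam then
            t ^ (lam.cells.card - ν.cells.card) * xe ^ (lam.cells.card - κ.cells.card) *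
              schur κ x' else 0)
          (by
            intro κ hκA hκn
            rw [Finset.mem_filter] at hκn
            exact if_neg (by rintro ⟨_, hH⟩; exact hκn ⟨hκA, hH.1⟩))]
        have hbl : A.filter (fun κ => κ ≤ lam) = below lam := by
          ext κ
          simp only [Finset.mem_filter, mem_below]
          constructor
          · rintro ⟨_, h⟩; exact h
          · intro h
            refine ⟨?_, h⟩
            rw [hmemA]
            rw [hmemA lam] at hlamA
            constructor
            · have h1 := YoungDiagram.mem_iff_lt_colLen (μ := κ) (i := κ.colLen 0 - 1) (j := 0)
              rcases Nat.eq_zero_or_pos (κ.colLen 0) with h0 | h0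
              · omega
              · have h2 : (κ.colLen 0 - 1, 0) ∈ κ := YoungDiagram.mem_iff_lt_colLen.mpr (by omega)
                have h3 := h h2
                rw [YoungDiagram.mem_iff_lt_colLen] at h3
                omega
            · have := le_iff_rowLen.mp h 0
              omega
        rw [hbl, Finset.mul_sum]
        apply Finset.sum_congr rfl
        intro κ _
        by_cases hH : Hstrip κ lam
        · rw [if_pos hH, if_pos ⟨hV, hH⟩]
          ring
        · rw [if_neg hH, if_neg (fun hc => hH hc.2), mul_zero]
      · rw [if_neg hV]
        rw [Finset.sum_eq_zero]
        intro κ _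
        rw [if_neg (fun hc => hV hc.1)]
    rw [Finset.sum_congr rfl hstep2]
    -- Step 3 : swap the two sums
    rw [Finset.sum_comm]
    -- Step 4 : apply key to each inner sum
    have hstep4 : ∀ κ ∈ A, (∑ lam ∈ A, (if Vstrip ν lam ∧ Hstrip κ lam then
        t ^ (lam.cells.card - ν.cells.card) * xe ^ (lam.cells.card - κ.cells.card) *
          schur κ x' else 0)) =
        schur κ x' * ((1 + t * xe) *
          ∑ᶠ rho : YoungDiagram, if Hstrip rho ν ∧ Vstrip rho κ then
            xe ^ (ν.cells.card - rho.cells.card) * t ^ (κ.cells.card - rho.cells.card) else 0) := by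
      intro κ hκA
      by_cases hs : schur κ x' = 0
      · rw [hs, zero_mul, Finset.sum_eq_zero]
        intro lam _
        by_cases hc : Vstrip ν lam ∧ Hstrip κ lam
        · rw [if_pos hc, mul_zero]
        · rw [if_neg hc]
      · have hcolκ : κ.colLen 0 ≤ e := schur_support_colLen hs
        have hinner : (∑ lam ∈ A, (if Vstrip ν lam ∧ Hstrip κ lam then
            t ^ (lam.cells.card - ν.cells.card) * xe ^ (lam.cells.card - κ.cells.card) *
              schur κ x' else 0)) =
            schur κ x' * ∑ lam ∈ A, (if Vstrip ν lam ∧ Hstrip κ lam then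
              t ^ (lam.cells.card - ν.cells.card) * xe ^ (lam.cells.card - κ.cells.card) else 0) := by
          rw [Finset.mul_sum]
          apply Finset.sum_congr rfl
          intro lam _
          by_cases hc : Vstrip ν lam ∧ Hstrip κ lam
          · rw [if_pos hc, if_pos hc]
            ring
          · rw [if_neg hc, if_neg hc, mul_zero]
        rw [hinner]
        congr 1
        have hfin : (∑ lam ∈ A, (if Vstrip ν lam ∧ Hstrip κ lam then
            t ^ (lam.cells.card - ν.cells.card) * xe ^ (lam.cells.card - κ.cells.card) else 0)) =
            ∑ᶠ lam : YoungDiagram, (if Vstrip ν lam ∧ Hstrip κ lam then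
              t ^ (lam.cells.card - ν.cells.card) * xe ^ (lam.cells.card - κ.cells.card) else 0) := by
          rw [finsum_eq_finset_sum_of_support_subset]
          intro lam hlam
          simp only [Function.mem_support, ne_eq] at hlam
          have hc : Vstrip ν lam ∧ Hstrip κ lam := by
            by_contra hcc
            rw [if_neg hcc] at hlam
            exact hlam rfl
          simp only [Finset.mem_coe]
          rw [hmemA]
          constructor
          · have := hstrip_colLen hc.2
            omega
          · have := (vstrip_iff.mp hc.1 0).2
            omega
        rw [hfin, key]
    rw [Finset.sum_congr rfl hstep4]
    -- Step 5 : convert inner finsum over rho to a sum over below ν and swap back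
    have hstep5 : ∀ κ ∈ A, schur κ x' * ((1 + t * xe) *
        ∑ᶠ rho : YoungDiagram, if Hstrip rho ν ∧ Vstrip rho κ then
          xe ^ (ν.cells.card - rho.cells.card) * t ^ (κ.cells.card - rho.cells.card) else 0) =
        ∑ rho ∈ below ν, (if Hstrip rho ν ∧ Vstrip rho κ then
          (1 + t * xe) * xe ^ (ν.cells.card - rho.cells.card) *
            (t ^ (κ.cells.card - rho.cells.card) * schur κ x') else 0) := by
      intro κ _
      rw [finsum_eq_finset_sum_of_support_subset _ (s := below ν)
        (by
          intro rho hrho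
          simp only [Function.mem_support, ne_eq] at hrho
          have hc : Hstrip rho ν ∧ Vstrip rho κ := by
            by_contra hcc
            rw [if_neg hcc] at hrho
            exact hrho rfl
          simp only [Finset.mem_coe, mem_below]
          exact hc.1.1)]
      rw [Finset.mul_sum, Finset.mul_sum]
      apply Finset.sum_congr rfl
      intro rho _
      by_cases hc : Hstrip rho ν ∧ Vstrip rho κ
      · rw [if_pos hc, if_pos hc]
        ring
      · rw [if_neg hc, if_neg hc]
        ring
    rw [Finset.sum_congr rfl hstep5, Finset.sum_comm]
    -- Step 6 : apply the induction hypothesis to each rho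
    have hstep6 : ∀ rho ∈ below ν, (∑ κ ∈ A, (if Hstrip rho ν ∧ Vstrip rho κ then
        (1 + t * xe) * xe ^ (ν.cells.card - rho.cells.card) *
          (t ^ (κ.cells.card - rho.cells.card) * schur κ x') else 0)) =
        (if Hstrip rho ν then (1 + t * xe) * xe ^ (ν.cells.card - rho.cells.card) *
          (schur rho x' * ∏ i, (1 + t * x' i)) else 0) := by
      intro rho hrho
      by_cases hH : Hstrip rho ν
      · rw [if_pos hH]
        have h1 : (∑ κ ∈ A, (if Hstrip rho ν ∧ Vstrip rho κ then
            (1 + t * xe) * xe ^ (ν.cells.card - rho.cells.card) *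
              (t ^ (κ.cells.card - rho.cells.card) * schur κ x') else 0)) =
            (1 + t * xe) * xe ^ (ν.cells.card - rho.cells.card) *
              ∑ κ ∈ A, (if Vstrip rho κ then
                t ^ (κ.cells.card - rho.cells.card) * schur κ x' else 0) := by
          rw [Finset.mul_sum]
          apply Finset.sum_congr rfl
          intro κ _
          by_cases hV : Vstrip rho κ
          · rw [if_pos ⟨hH, hV⟩, if_pos hV]
          · rw [if_neg (fun hc => hV hc.2), if_neg hV, mul_zero]
        rw [h1]
        congr 1
        have h2 : (∑ κ ∈ A, (if Vstrip rho κ then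
            t ^ (κ.cells.card - rho.cells.card) * schur κ x' else 0)) =
            ∑ᶠ κ : YoungDiagram, (if Vstrip rho κ then
              t ^ (κ.cells.card - rho.cells.card) * schur κ x' else 0) := by
          rw [finsum_eq_finset_sum_of_support_subset]
          intro κ hκ
          simp only [Function.mem_support, ne_eq] at hκ
          have hV : Vstrip rho κ := by
            by_contra hcc
            rw [if_neg hcc] at hκ
            exact hκ rfl
          have hs : schur κ x' ≠ 0 := by
            intro hc
            rw [if_pos hV, hc, mul_zero] at hκ
            exact hκ rfl
          simp only [Finset.mem_coe]
          rw [hmemA]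
          constructor
          · have := schur_support_colLen hs
            omega
          · have h3 := (vstrip_iff.mp hV 0).2
            have h4 := le_iff_rowLen.mp (mem_below.mp hrho) 0
            omega
        rw [h2, ih rho t x']
      · rw [if_neg hH, Finset.sum_eq_zero]
        intro κ _
        rw [if_neg (fun hc => hH hc.1)]
    rw [Finset.sum_congr rfl hstep6]
    -- Step 7 : reassemble via branching of ν
    have hbranch := branching ν e x
    have hprod : (∏ i : Fin (e + 1), (1 + t * x i)) =
        (∏ i : Fin e, (1 + t * x' i)) * (1 + t * xe) := by
      rw [Fin.prod_univ_castSucc]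
    rw [hprod, hbranch, Finset.sum_mul]
    apply Finset.sum_congr rfl
    intro rho _
    by_cases hH : Hstrip rho ν
    · rw [if_pos hH, if_pos hH]
      ring
    · rw [if_neg hH, if_neg hH]
      ring


lemma transpose_bot : (⊥ : YoungDiagram).transpose = ⊥ := by
  ext c
  rw [YoungDiagram.mem_cells, YoungDiagram.mem_cells, YoungDiagram.mem_transpose]
  constructor
  · intro h; exact absurd h (YoungDiagram.notMem_bot _)
  · intro h; exact absurd h (YoungDiagram.notMem_bot _)

lemma rowLen_pos_of_ne_bot {lam : YoungDiagram} (h : lam ≠ ⊥) : 0 < lam.rowLen 0 := by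
  have hne : lam.cells.Nonempty := by
    by_contra hc
    rw [Finset.not_nonempty_iff_eq_empty] at hc
    exact h (by ext1; rw [hc, YoungDiagram.cells_bot])
  obtain ⟨c, hc⟩ := hne
  rw [YoungDiagram.mem_cells] at hc
  have : (0, 0) ∈ lam := lam.up_left_mem (Nat.zero_le _) (Nat.zero_le _)
    (by rw [← Prod.mk.eta (p := c)] at hc; exact hc)
  rw [YoungDiagram.mem_iff_lt_rowLen] at this
  omega

set_option maxHeartbeats 3000000 in
lemma cauchy' : ∀ (f e : ℕ) (x : Fin e → ℚ) (y : Fin f → ℚ),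
    (∏ i, ∏ j, (1 + x i * y j)) =
      ∑ᶠ lam : YoungDiagram, schur lam x * schur lam.transpose y := by
  intro f
  induction f with
  | zero =>
    intro e x y
    have h1 : (∏ i : Fin e, ∏ j : Fin 0, (1 + x i * y j)) = 1 := by
      apply Finset.prod_eq_one
      intro i _
      rw [Finset.univ_eq_empty, Finset.prod_empty]
    rw [h1]
    rw [finsum_eq_single _ ⊥ (fun lam hlam => by
      have h2 : schur lam.transpose y = 0 := by
        apply schur_vanish
        rw [YoungDiagram.colLen_transpose]
        exact rowLen_pos_of_ne_bot hlam
      rw [h2, mul_zero])]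
    rw [transpose_bot, schur_bot, schur_bot]
    norm_num
  | succ f ihf =>
    intro e x y
    set y' : Fin f → ℚ := fun j => y j.castSucc with hy'
    set yl : ℚ := y (Fin.last f) with hyl
    set B : Finset YoungDiagram := below (rect e (f + 1 + 1)) with hB
    have hmemB : ∀ lam : YoungDiagram, lam ∈ B ↔
        lam.colLen 0 ≤ e ∧ lam.rowLen 0 ≤ f + 1 + 1 := by
      intro lam
      rw [hB, mem_below, le_rect_iff]
    rw [finsum_eq_finset_sum_of_support_subset _ (s := B)
      (by
        intro lam hlam
        simp only [Function.mem_support, ne_eq] at hlam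
        have h1 : schur lam x ≠ 0 := fun hc => hlam (by rw [hc, zero_mul])
        have h2 : schur lam.transpose y ≠ 0 := fun hc => hlam (by rw [hc, mul_zero])
        simp only [Finset.mem_coe]
        rw [hmemB]
        constructor
        · exact schur_support_colLen h1
        · have := schur_support_colLen h2
          rw [YoungDiagram.colLen_transpose] at this
          omega)]
    -- branch the transpose Schur function
    have hstep2 : ∀ lam ∈ B, schur lam x * schur lam.transpose y =
        ∑ rho ∈ B, (if Vstrip rho lam then
          schur lam x * (schur rho.transpose y' *
            yl ^ (lam.cells.card - rho.cells.card)) else 0) := by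
      intro lam hlamB
      rw [branching lam.transpose f y]
      have hreindex : (∑ κ ∈ below lam.transpose, (if Hstrip κ lam.transpose then
          schur κ (fun i => y i.castSucc) *
            (y (Fin.last f)) ^ (lam.transpose.cells.card - κ.cells.card) else 0)) =
          ∑ rho ∈ below lam, (if Vstrip rho lam then
            schur rho.transpose y' * yl ^ (lam.cells.card - rho.cells.card) else 0) := by
        refine Finset.sum_nbij' (i := fun κ => κ.transpose) (j := fun rho => rho.transpose)
          ?_ ?_ ?_ ?_ ?_
        · intro κ hκ
          rw [mem_below] at hκ ⊢
          have h := YoungDiagram.transpose_mono hκ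
          rwa [YoungDiagram.transpose_transpose] at h
        · intro rho hrho
          rw [mem_below] at hrho ⊢
          exact YoungDiagram.transpose_mono hrho
        · intro κ _; exact YoungDiagram.transpose_transpose κ
        · intro rho _; exact YoungDiagram.transpose_transpose rho
        · intro κ hκ
          by_cases hH : Hstrip κ lam.transpose
          · have hV : Vstrip κ.transpose lam := by
              rw [← hstrip_transpose_iff, YoungDiagram.transpose_transpose]
              exact hH
            rw [if_pos hH, if_pos hV, YoungDiagram.transpose_transpose]
            rw [card_transpose lam, card_transpose κ]
          · have hV : ¬ Vstrip κ.transpose lam := by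
              rw [← hstrip_transpose_iff, YoungDiagram.transpose_transpose]
              exact hH
            rw [if_neg hH, if_neg hV]
      rw [hreindex, Finset.mul_sum]
      rw [← Finset.sum_subset (s₁ := below lam) (s₂ := B)
        (fun rho hrho => by
          rw [mem_below] at hrho
          rw [hmemB]
          rw [hmemB lam] at hlamB
          constructor
          · rcases Nat.eq_zero_or_pos (rho.colLen 0) with h0 | h0
            · omega
            · have h2 : (rho.colLen 0 - 1, 0) ∈ rho := YoungDiagram.mem_iff_lt_colLen.mpr (by omega)
              have h3 := hrho h2
              rw [YoungDiagram.mem_iff_lt_colLen] at h3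
              omega
          · have := le_iff_rowLen.mp hrho 0
            omega)
        (fun rho _ hrhon => by
          rw [mem_below] at hrhon
          rw [if_neg (fun hc => hrhon hc.1)])]
      apply Finset.sum_congr rfl
      intro rho _
      by_cases hV : Vstrip rho lam
      · rw [if_pos hV, if_pos hV]
      · rw [if_neg hV, if_neg hV, mul_zero]
    rw [Finset.sum_congr rfl hstep2, Finset.sum_comm]
    -- apply Pieri for each rho
    have hstep3 : ∀ rho ∈ B, (∑ lam ∈ B, (if Vstrip rho lam then
        schur lam x * (schur rho.transpose y' *
          yl ^ (lam.cells.card - rho.cells.card)) else 0)) =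
        schur rho.transpose y' * (schur rho x * ∏ i, (1 + yl * x i)) := by
      intro rho _
      by_cases hs : schur rho.transpose y' = 0
      · rw [hs, zero_mul, Finset.sum_eq_zero]
        intro lam _
        by_cases hV : Vstrip rho lam
        · rw [if_pos hV, mul_comm (schur lam x), mul_assoc, zero_mul]
        · rw [if_neg hV]
      · have hrowrho : rho.rowLen 0 ≤ f := by
          have := schur_support_colLen hs
          rw [YoungDiagram.colLen_transpose] at this
          omega
        have h1 : (∑ lam ∈ B, (if Vstrip rho lam then
            schur lam x * (schur rho.transpose y' *
              yl ^ (lam.cells.card - rho.cells.card)) else 0)) =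
            schur rho.transpose y' * ∑ lam ∈ B, (if Vstrip rho lam then
              yl ^ (lam.cells.card - rho.cells.card) * schur lam x else 0) := by
          rw [Finset.mul_sum]
          apply Finset.sum_congr rfl
          intro lam _
          by_cases hV : Vstrip rho lam
          · rw [if_pos hV, if_pos hV]
            ring
          · rw [if_neg hV, if_neg hV, mul_zero]
        rw [h1]
        congr 1
        have h2 : (∑ lam ∈ B, (if Vstrip rho lam then
            yl ^ (lam.cells.card - rho.cells.card) * schur lam x else 0)) =
            ∑ᶠ lam : YoungDiagram, (if Vstrip rho lam then
              yl ^ (lam.cells.card - rho.cells.card) * schur lam x else 0) := by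
          rw [finsum_eq_finset_sum_of_support_subset]
          intro lam hlam
          simp only [Function.mem_support, ne_eq] at hlam
          have hV : Vstrip rho lam := by
            by_contra hcc
            rw [if_neg hcc] at hlam
            exact hlam rfl
          have hsx : schur lam x ≠ 0 := by
            intro hc
            rw [if_pos hV, hc, mul_zero] at hlam
            exact hlam rfl
          simp only [Finset.mem_coe]
          rw [hmemB]
          constructor
          · exact schur_support_colLen hsx
          · have := (vstrip_iff.mp hV 0).2
            omega
        rw [h2, pieri e rho yl x]
    rw [Finset.sum_congr rfl hstep3]
    -- reassemble
    have hLHS : (∏ i : Fin (e), ∏ j : Fin (f + 1), (1 + x i * y j)) =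
        (∏ i : Fin e, ∏ j : Fin f, (1 + x i * y' j)) * ∏ i : Fin e, (1 + yl * x i) := by
      rw [← Finset.prod_mul_distrib]
      apply Finset.prod_congr rfl
      intro i _
      rw [Fin.prod_univ_castSucc]
      congr 1
      rw [hyl]
      ring
    rw [hLHS, ihf e x y']
    rw [finsum_eq_finset_sum_of_support_subset _ (s := B)
      (by
        intro lam hlam
        simp only [Function.mem_support, ne_eq] at hlam
        have h1 : schur lam x ≠ 0 := fun hc => hlam (by rw [hc, zero_mul])
        have h2 : schur lam.transpose y' ≠ 0 := fun hc => hlam (by rw [hc, mul_zero])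
        simp only [Finset.mem_coe]
        rw [hmemB]
        constructor
        · exact schur_support_colLen h1
        · have := schur_support_colLen h2
          rw [YoungDiagram.colLen_transpose] at this
          omega)]
    rw [Finset.sum_mul]
    apply Finset.sum_congr rfl
    intro rho _
    ring

/-- The dual Cauchy identity:
`∏_{i,j}(1 + xᵢyⱼ) = ∑_{λ ⊆ e×f} s_λ(x)·s_{λ*}(y)`. -/
theorem cauchy_identity (e f : ℕ) (x : Fin e → ℚ) (y : Fin f → ℚ) :
    (∏ i, ∏ j, (1 + x i * y j)) =
    ∑ᶠ lam : YoungDiagram,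
      if lam.rowLen 0 ≤ f ∧ lam.colLen 0 ≤ e then
        schur lam x * schur lam.transpose y else 0 := by
  rw [cauchy' f e x y]
  apply finsum_congr
  intro lam
  by_cases hcond : lam.rowLen 0 ≤ f ∧ lam.colLen 0 ≤ e
  · rw [if_pos hcond]
  · rw [if_neg hcond]
    by_cases h1 : lam.colLen 0 ≤ e
    · have h2 : f < lam.rowLen 0 := by
        rcases Nat.lt_or_ge f (lam.rowLen 0) with h | h
        · exact h
        · exact absurd ⟨h, h1⟩ hcond
      have : schur lam.transpose y = 0 := by
        apply schur_vanish
        rw [YoungDiagram.colLen_transpose]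
        exact h2
      rw [this, mul_zero]
    · have : schur lam x = 0 := schur_vanish x (by omega)
      rw [this, zero_mul]

end ChernTensor
end
end

section
/- If λ*₁ ≤ e < μ₁ (the partition λ has at most e parts but μ has a part larger than e), then P_{λ,μ}(e,f) = 0 for all f. -/
open scoped Classical BigOperators
noncomputable section

namespace ChernTensor

lemma lrCoeff_rowLen (lam' mu nu' : YoungDiagram) (h : lrCoeff lam' mu nu' ≠ 0) :
    mu.rowLen 0 ≤ nu'.rowLen 0 := by
  rw [lrCoeff] at h
  split_ifs at h
  case neg => exact absurd rfl h
  obtain ⟨⟨T, hT⟩⟩ := (Nat.card_ne_zero.mp h).1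
  set S := (nu'.cells \ lam'.cells).filter (fun c => T c = 1) with hS
  have hcard : S.card = mu.rowLen 0 := by simpa using hT.2.2.2.1 0
  have hinj : Set.InjOn Prod.snd (S : Set (ℕ × ℕ)) := by
    intro c hc c' hc' hsnd
    replace hc := Finset.mem_filter.mp (Finset.mem_coe.mp hc)
    replace hc' := Finset.mem_filter.mp (Finset.mem_coe.mp hc')
    by_contra hne
    have hfst : c.1 ≠ c'.1 := fun h => hne (Prod.ext h hsnd)
    have hcm : ((c.1, c.2) : ℕ × ℕ) ∈ nu'.cells \ lam'.cells := hc.1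
    have hcm' : ((c'.1, c.2) : ℕ × ℕ) ∈ nu'.cells \ lam'.cells := by
      rw [hsnd]; exact hc'.1
    rcases hfst.lt_or_gt with hlt | hlt
    · have := hT.2.2.1 c.1 c'.1 c.2 hlt hcm hcm'
      rw [show ((c.1, c.2) : ℕ × ℕ) = c from rfl,
        show ((c'.1, c.2) : ℕ × ℕ) = c' from Prod.ext rfl hsnd, hc.2, hc'.2] at this
      omega
    · have := hT.2.2.1 c'.1 c.1 c.2 hlt hcm' hcm
      rw [show ((c.1, c.2) : ℕ × ℕ) = c from rfl,
        show ((c'.1, c.2) : ℕ × ℕ) = c' from Prod.ext rfl hsnd, hc.2, hc'.2] at this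
      omega
  have hsub : S.image Prod.snd ⊆ Finset.range (nu'.rowLen 0) := by
    intro j hj
    obtain ⟨c, hc, rfl⟩ := Finset.mem_image.mp hj
    simp only [hS, Finset.mem_filter, Finset.mem_sdiff, YoungDiagram.mem_cells] at hc
    have : (0, c.2) ∈ nu' := nu'.isLowerSet
      (Prod.mk_le_mk.mpr ⟨Nat.zero_le _, le_refl _⟩) (by simpa using hc.1.1)
    rw [Finset.mem_range, ← YoungDiagram.mem_iff_lt_rowLen]
    exact this
  calc mu.rowLen 0 = (S.image Prod.snd).card := by
        rw [Finset.card_image_of_injOn hinj, hcard]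
    _ ≤ _ := by simpa using Finset.card_le_card hsub


/-- Vanishing: if `λ*₁ ≤ e < μ₁` then `P_{λ,μ}(e,f) = 0`. -/
theorem P_vanishing (lam mu : YoungDiagram) (e : ℕ)
    (h1 : lam.colLen 0 ≤ e) (h2 : e < mu.rowLen 0) (f : ℚ) :
    P lam mu (e : ℚ) f = 0 := by
  have key : ∀ nu : YoungDiagram,
      (lrCoeff lam.transpose mu nu.transpose : ℚ) *
        skewContPoly e nu lam * skewContPoly f nu.transpose mu / hookProd nu = 0 := by
    intro nu
    by_cases h : lrCoeff lam.transpose mu nu.transpose = 0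
    · rw [h]; simp
    · have hle := lrCoeff_rowLen _ _ _ h
      rw [YoungDiagram.rowLen_transpose] at hle
      have hmem : ((e, 0) : ℕ × ℕ) ∈ nu.cells \ lam.cells := by
        rw [Finset.mem_sdiff, YoungDiagram.mem_cells, YoungDiagram.mem_cells,
          YoungDiagram.mem_iff_lt_colLen, YoungDiagram.mem_iff_lt_colLen]
        exact ⟨lt_of_lt_of_le h2 hle, by omega⟩
      have hz : skewContPoly (e : ℚ) nu lam = 0 := by
        rw [skewContPoly]
        exact Finset.prod_eq_zero hmem (by simp)
      rw [hz]; simp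
  rw [P]
  exact finsum_eq_zero_of_forall_eq_zero key

end ChernTensor
end
end
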